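/- arXiv:2302.03809 — 2 statements merged into one kernel-verified Lean document; each statement's English description precedes it below -/
import Mathlib

section
/- Let κ̄ : [0,L] → ℝ be continuous such that the Lagrange kernel of ȳ ↦ ȳ''' + κ̄ȳ' is nonnegative for s > r on [0,L], and let Ā solve Ā''' + κ̄Ā' = 1/2 with Ā(0)=Ā'(0)=Ā''(0)=0. Let A ∈ C³([0,L]) solve A''' + κA' = 1/2 with A(0)=A'(0)=A''(0)=0 for continuous κ, and suppose A'(s) > 0 for all s ∈ (0,L]. If κ ≤ κ̄ on [0,L] then A(L) ≥ Ā(L); if κ ≥ κ̄ then A(L) ≤ Ā(L). In either case, equality A(L) = Ā(L) implies κ ≡ κ̄ on [0,L]. -/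
open Set MeasureTheory intervalIntegral Filter

namespace AreaSchur

lemma iteratedDeriv_two (f : ℝ → ℝ) : iteratedDeriv 2 f = deriv (deriv f) := by
  rw [show (2:ℕ) = 0 + 1 + 1 from rfl, iteratedDeriv_succ, iteratedDeriv_succ,
    iteratedDeriv_zero]

lemma iteratedDeriv_three (f : ℝ → ℝ) : iteratedDeriv 3 f = deriv (deriv (deriv f)) := by
  rw [show (3:ℕ) = 0 + 1 + 1 + 1 from rfl, iteratedDeriv_succ, iteratedDeriv_succ,
    iteratedDeriv_succ, iteratedDeriv_zero]

lemma contDiff_deriv3 {f : ℝ → ℝ} (h : ContDiff ℝ 3 f) :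
    Differentiable ℝ f ∧ Differentiable ℝ (deriv f) ∧ Differentiable ℝ (deriv (deriv f)) ∧
      Continuous (deriv (deriv (deriv f))) := by
  rw [show (3 : WithTop ℕ∞) = 2 + 1 by norm_num, contDiff_succ_iff_deriv] at h
  obtain ⟨h1, -, h⟩ := h
  rw [show (2 : WithTop ℕ∞) = 1 + 1 by norm_num, contDiff_succ_iff_deriv] at h
  obtain ⟨h2, -, h⟩ := h
  rw [contDiff_one_iff_deriv] at h
  exact ⟨h1, h2, h.1, h.2⟩

/-- All hypotheses on the comparison kernel, bundled. -/
structure KD (L : ℝ) (κbar : ℝ → ℝ) (Kbar : ℝ → ℝ → ℝ) : Prop where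
  hL : 0 < L
  hκ : ContinuousOn κbar (Icc 0 L)
  smooth : ∀ r, ContDiff ℝ 3 (fun s => Kbar s r)
  kode : ∀ r ∈ Icc (0:ℝ) L, ∀ s ∈ Icc (0:ℝ) L,
    iteratedDeriv 3 (fun u => Kbar u r) s + κbar s * deriv (fun u => Kbar u r) s = 0
  k0 : ∀ r ∈ Icc (0:ℝ) L, Kbar r r = 0
  k1 : ∀ r ∈ Icc (0:ℝ) L, deriv (fun u => Kbar u r) r = 0
  k2 : ∀ r ∈ Icc (0:ℝ) L, iteratedDeriv 2 (fun u => Kbar u r) r = 1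

variable {L : ℝ} {κbar : ℝ → ℝ} {Kbar : ℝ → ℝ → ℝ}

/-- first `s`-derivative of the kernel -/
noncomputable def g (Kbar : ℝ → ℝ → ℝ) (s r : ℝ) : ℝ := deriv (fun u => Kbar u r) s
/-- second `s`-derivative of the kernel -/
noncomputable def g1 (Kbar : ℝ → ℝ → ℝ) (s r : ℝ) : ℝ := deriv (deriv (fun u => Kbar u r)) s
/-- third `s`-derivative of the kernel -/
noncomputable def g2 (Kbar : ℝ → ℝ → ℝ) (s r : ℝ) : ℝ :=
  deriv (deriv (deriv (fun u => Kbar u r))) s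

lemma KD.hd0 (h : KD L κbar Kbar) (r s : ℝ) :
    HasDerivAt (fun u => Kbar u r) (g Kbar s r) s :=
  ((contDiff_deriv3 (h.smooth r)).1 s).hasDerivAt

lemma KD.hd1 (h : KD L κbar Kbar) (r s : ℝ) :
    HasDerivAt (fun u => g Kbar u r) (g1 Kbar s r) s :=
  ((contDiff_deriv3 (h.smooth r)).2.1 s).hasDerivAt

lemma KD.hd2 (h : KD L κbar Kbar) (r s : ℝ) :
    HasDerivAt (fun u => g1 Kbar u r) (g2 Kbar s r) s :=
  ((contDiff_deriv3 (h.smooth r)).2.2.1 s).hasDerivAt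

lemma KD.ode' (h : KD L κbar Kbar) {r s : ℝ} (hr : r ∈ Icc 0 L) (hs : s ∈ Icc 0 L) :
    g2 Kbar s r = -(κbar s * g Kbar s r) := by
  have := h.kode r hr s hs
  rw [iteratedDeriv_three] at this
  unfold g2 g
  linarith

lemma KD.diag0 (h : KD L κbar Kbar) {r : ℝ} (hr : r ∈ Icc 0 L) : g Kbar r r = 0 := h.k1 r hr

lemma KD.diag1 (h : KD L κbar Kbar) {r : ℝ} (hr : r ∈ Icc 0 L) : g1 Kbar r r = 1 := by
  have := h.k2 r hr
  rwa [iteratedDeriv_two] at this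

/-- Antisymmetry of the second-order Cauchy kernel, via constancy of the Wronskian. -/
lemma KD.antisym (h : KD L κbar Kbar) {a b : ℝ} (ha : a ∈ Icc 0 L) (hb : b ∈ Icc 0 L) :
    g Kbar b a = - g Kbar a b := by
  set W : ℝ → ℝ := fun s => g Kbar s a * g1 Kbar s b - g1 Kbar s a * g Kbar s b with hW
  have hWd : ∀ x, HasDerivAt W
      ((g1 Kbar x a * g1 Kbar x b + g Kbar x a * g2 Kbar x b)
        - (g2 Kbar x a * g Kbar x b + g1 Kbar x a * g1 Kbar x b)) x := fun x =>
    ((h.hd1 a x).mul (h.hd2 b x)).sub ((h.hd2 a x).mul (h.hd1 b x))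
  have hderiv : ∀ x ∈ Ico (0:ℝ) L, HasDerivWithinAt W 0 (Ici x) x := by
    intro x hx
    have hx' : x ∈ Icc 0 L := ⟨hx.1, hx.2.le⟩
    have h2 : (g1 Kbar x a * g1 Kbar x b + g Kbar x a * g2 Kbar x b)
        - (g2 Kbar x a * g Kbar x b + g1 Kbar x a * g1 Kbar x b) = 0 := by
      rw [h.ode' hb hx', h.ode' ha hx']; ring
    exact (h2 ▸ hWd x).hasDerivWithinAt
  have hcont : ContinuousOn W (Icc 0 L) :=
    (continuous_iff_continuousAt.2 fun x => (hWd x).continuousAt).continuousOn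
  have hconst := constant_of_has_deriv_right_zero hcont hderiv
  have hWa : W a = - g Kbar a b := by
    simp only [hW, h.diag0 ha, h.diag1 ha]; ring
  have hWb : W b = g Kbar b a := by
    simp only [hW, h.diag0 hb, h.diag1 hb]; ring
  rw [← hWb, ← hWa, hconst b hb, hconst a ha]

/-- Two-sided Grönwall wrapper for `ℝ × ℝ`-valued functions. -/
lemma gron {F F' : ℝ → ℝ × ℝ} {a b C : ℝ} (hC : 0 ≤ C)
    (hd : ∀ x ∈ Icc a b, HasDerivAt F (F' x) x)
    (hb : ∀ x ∈ Icc a b, ‖F' x‖ ≤ C * ‖F x‖) {c : ℝ} (hc : c ∈ Icc a b) :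
    ∀ x ∈ Icc a b, ‖F x‖ ≤ ‖F c‖ * Real.exp (C * (b - a)) := by
  have key : ∀ x ∈ Icc c b, ‖F x‖ ≤ ‖F c‖ * Real.exp (C * (b - a)) := by
    intro x hx
    have hsub : Icc c b ⊆ Icc a b := Icc_subset_Icc hc.1 le_rfl
    have h1 := norm_le_gronwallBound_of_norm_deriv_right_le (f := F) (f' := F')
      (δ := ‖F c‖) (K := C) (ε := 0) (a := c) (b := b)
      (fun y hy => ((hd y (hsub hy)).continuousAt).continuousWithinAt)
      (fun y hy => (hd y (hsub ⟨hy.1, hy.2.le⟩)).hasDerivWithinAt)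
      le_rfl
      (fun y hy => by rw [add_zero]; exact hb y (hsub ⟨hy.1, hy.2.le⟩))
      x hx
    rw [gronwallBound_ε0] at h1
    refine h1.trans (mul_le_mul_of_nonneg_left (Real.exp_le_exp.2 ?_) (norm_nonneg _))
    have : x - c ≤ b - a := by cases hx; cases hc; linarith
    exact mul_le_mul_of_nonneg_left this hC
  intro x hx
  rcases le_or_gt c x with hcx | hxc
  · exact key x ⟨hcx, hx.2⟩
  · -- reflect: G t := F (a + c - t) on [a, c], base point a
    set G : ℝ → ℝ × ℝ := fun t => F (a + c - t) with hG
    have hGd : ∀ t ∈ Icc a c, HasDerivAt G ((-1 : ℝ) • F' (a + c - t)) t := by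
      intro t ht
      have hmem : a + c - t ∈ Icc a b := by
        cases ht; cases hc; cases hx; constructor <;> linarith
      have inner : HasDerivAt (fun t : ℝ => a + c - t) (-1) t := by
        simpa using (hasDerivAt_id t).const_sub (a + c)
      exact (hd _ hmem).scomp t inner
    have key2 := norm_le_gronwallBound_of_norm_deriv_right_le
      (f := G) (f' := fun t => (-1 : ℝ) • F' (a + c - t))
      (δ := ‖F c‖) (K := C) (ε := 0) (a := a) (b := c)
      (fun y hy => ((hGd y hy).continuousAt).continuousWithinAt)
      (fun y hy => (hGd y ⟨hy.1, hy.2.le⟩).hasDerivWithinAt)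
      (by simp [hG])
      (fun y hy => by
        rw [add_zero, norm_smul]
        simp only [norm_neg, norm_one, one_mul]
        exact hb _ (by cases hy; cases hc; cases hx; constructor <;> linarith))
      (a + c - x) (by cases hx; constructor <;> linarith)
    rw [gronwallBound_ε0] at key2
    have hx' : G (a + c - x) = F x := by simp [hG]
    rw [hx'] at key2
    refine key2.trans (mul_le_mul_of_nonneg_left (Real.exp_le_exp.2 ?_) (norm_nonneg _))
    have : a + c - x - a ≤ b - a := by cases hx; cases hc; linarith
    exact mul_le_mul_of_nonneg_left this hC

/-- Master quantitative lemma: uniform bounds and Lipschitz estimates (in both slots)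
for `g`, `g1` on the square. -/
lemma KD.master (h : KD L κbar Kbar) : ∃ C : ℝ, 1 ≤ C ∧
    (∀ s ∈ Icc (0:ℝ) L, |κbar s| ≤ C) ∧
    (∀ r ∈ Icc 0 L, ∀ s ∈ Icc 0 L,
      |g Kbar s r| ≤ C ∧ |g1 Kbar s r| ≤ C ∧ |g2 Kbar s r| ≤ C) ∧
    (∀ r ∈ Icc 0 L, ∀ s ∈ Icc 0 L, ∀ s' ∈ Icc 0 L,
      |g Kbar s r - g Kbar s' r| ≤ C * |s - s'| ∧
      |g1 Kbar s r - g1 Kbar s' r| ≤ C * |s - s'|) ∧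
    (∀ s ∈ Icc 0 L, ∀ r ∈ Icc 0 L, ∀ r' ∈ Icc 0 L,
      |g Kbar s r - g Kbar s r'| ≤ C * |r - r'| ∧
      |g1 Kbar s r - g1 Kbar s r'| ≤ C * |r - r'|) := by
  obtain ⟨M0, hM0⟩ := isCompact_Icc.exists_bound_of_continuousOn h.hκ
  set Cm : ℝ := max 1 M0 with hCm
  have hCm1 : 1 ≤ Cm := le_max_left _ _
  have hCm0 : 0 ≤ Cm := zero_le_one.trans hCm1
  have hκb : ∀ s ∈ Icc (0:ℝ) L, |κbar s| ≤ Cm := fun s hs =>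
    (hM0 s hs).trans (le_max_right _ _)
  set E : ℝ := Real.exp (Cm * (L - 0)) with hE
  have hE1 : 1 ≤ E := by
    rw [hE]
    apply Real.one_le_exp
    have : 0 ≤ L - 0 := by simpa using h.hL.le
    positivity
  have hE0 : 0 < E := lt_of_lt_of_le one_pos hE1
  have hCmE : E ≤ Cm * E := le_mul_of_one_le_left hE0.le hCm1
  have hCmE2 : Cm * E ≤ Cm * E * E := le_mul_of_one_le_right (by positivity) hE1
  have hE_le : E ≤ Cm * E * E := hCmE.trans hCmE2
  have h1le : (1:ℝ) ≤ Cm * E * E := hE1.trans hE_le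
  -- uniform bound via Grönwall
  have hFb : ∀ r ∈ Icc (0:ℝ) L, ∀ s ∈ Icc (0:ℝ) L,
      ‖(g Kbar s r, g1 Kbar s r)‖ ≤ E := by
    intro r hr s hs
    have hgr := gron (F := fun s => (g Kbar s r, g1 Kbar s r))
      (F' := fun s => (g1 Kbar s r, g2 Kbar s r)) (a := 0) (b := L) hCm0
      (fun x _ => (h.hd1 r x).prodMk (h.hd2 r x))
      (fun x hx => by
        show ‖((g1 Kbar x r, g2 Kbar x r) : ℝ × ℝ)‖
          ≤ Cm * ‖((g Kbar x r, g1 Kbar x r) : ℝ × ℝ)‖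
        rw [Prod.norm_def]
        apply max_le
        · exact (norm_snd_le ((g Kbar x r, g1 Kbar x r) : ℝ × ℝ)).trans
            (le_mul_of_one_le_left (norm_nonneg _) hCm1)
        · rw [h.ode' hr hx]
          rw [Real.norm_eq_abs, abs_neg, abs_mul]
          exact mul_le_mul (hκb x hx)
            (norm_fst_le ((g Kbar x r, g1 Kbar x r) : ℝ × ℝ)) (abs_nonneg _)
            hCm0)
      hr s hs
    have hbase : ‖((g Kbar r r, g1 Kbar r r) : ℝ × ℝ)‖ = 1 := by
      rw [h.diag0 hr, h.diag1 hr, Prod.norm_def]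
      simp
    rw [hbase, one_mul] at hgr
    exact hgr
  have hgb : ∀ r ∈ Icc (0:ℝ) L, ∀ s ∈ Icc (0:ℝ) L, |g Kbar s r| ≤ E := fun r hr s hs =>
    (norm_fst_le ((g Kbar s r, g1 Kbar s r) : ℝ × ℝ)).trans (hFb r hr s hs)
  have hg1b : ∀ r ∈ Icc (0:ℝ) L, ∀ s ∈ Icc (0:ℝ) L, |g1 Kbar s r| ≤ E := fun r hr s hs =>
    (norm_snd_le ((g Kbar s r, g1 Kbar s r) : ℝ × ℝ)).trans (hFb r hr s hs)
  have hg2b : ∀ r ∈ Icc (0:ℝ) L, ∀ s ∈ Icc (0:ℝ) L, |g2 Kbar s r| ≤ Cm * E := by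
    intro r hr s hs
    rw [h.ode' hr hs, abs_neg, abs_mul]
    exact mul_le_mul (hκb s hs) (hgb r hr s hs) (abs_nonneg _) hCm0
  -- Lipschitz in the first slot
  have hlips : ∀ r ∈ Icc (0:ℝ) L, ∀ s ∈ Icc (0:ℝ) L, ∀ s' ∈ Icc (0:ℝ) L,
      |g Kbar s r - g Kbar s' r| ≤ E * |s - s'| ∧
      |g1 Kbar s r - g1 Kbar s' r| ≤ (Cm * E) * |s - s'| := by
    intro r hr s hs s' hs'
    constructor
    · have := Convex.norm_image_sub_le_of_norm_hasDerivWithin_le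
        (f := fun u => g Kbar u r) (f' := fun u => g1 Kbar u r) (s := Icc 0 L)
        (fun x hx => (h.hd1 r x).hasDerivWithinAt)
        (fun x hx => hg1b r hr x hx) (convex_Icc _ _) hs' hs
      simpa using this
    · have := Convex.norm_image_sub_le_of_norm_hasDerivWithin_le
        (f := fun u => g1 Kbar u r) (f' := fun u => g2 Kbar u r) (s := Icc 0 L)
        (fun x hx => (h.hd2 r x).hasDerivWithinAt)
        (fun x hx => hg2b r hr x hx) (convex_Icc _ _) hs' hs
      simpa using this
  -- Lipschitz in the second slot via Grönwall on the difference
  have hlipr : ∀ s ∈ Icc (0:ℝ) L, ∀ r ∈ Icc (0:ℝ) L, ∀ r' ∈ Icc (0:ℝ) L,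
      ‖((g Kbar s r - g Kbar s r', g1 Kbar s r - g1 Kbar s r') : ℝ × ℝ)‖
        ≤ (Cm * E) * |r - r'| * E := by
    intro s hs r hr r' hr'
    have hgr := gron
      (F := fun x => (g Kbar x r - g Kbar x r', g1 Kbar x r - g1 Kbar x r'))
      (F' := fun x => (g1 Kbar x r - g1 Kbar x r', g2 Kbar x r - g2 Kbar x r'))
      (a := 0) (b := L) hCm0
      (fun x _ => ((h.hd1 r x).sub (h.hd1 r' x)).prodMk ((h.hd2 r x).sub (h.hd2 r' x)))
      (fun x hx => by
        show ‖((g1 Kbar x r - g1 Kbar x r', g2 Kbar x r - g2 Kbar x r') : ℝ × ℝ)‖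
          ≤ Cm * ‖((g Kbar x r - g Kbar x r', g1 Kbar x r - g1 Kbar x r') : ℝ × ℝ)‖
        rw [Prod.norm_def]
        apply max_le
        · exact (norm_snd_le ((g Kbar x r - g Kbar x r',
            g1 Kbar x r - g1 Kbar x r') : ℝ × ℝ)).trans
            (le_mul_of_one_le_left (norm_nonneg _) hCm1)
        · have hode : g2 Kbar x r - g2 Kbar x r'
              = -(κbar x * (g Kbar x r - g Kbar x r')) := by
            rw [h.ode' hr hx, h.ode' hr' hx]; ring
          rw [hode, Real.norm_eq_abs, abs_neg, abs_mul]
          exact mul_le_mul (hκb x hx)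
            (norm_fst_le ((g Kbar x r - g Kbar x r',
              g1 Kbar x r - g1 Kbar x r') : ℝ × ℝ)) (abs_nonneg _) hCm0)
      hr s hs
    refine hgr.trans ?_
    have hbase : ‖((g Kbar r r - g Kbar r r', g1 Kbar r r - g1 Kbar r r') : ℝ × ℝ)‖
        ≤ (Cm * E) * |r - r'| := by
      rw [Prod.norm_def]
      apply max_le
      · have h1 : |g Kbar r r - g Kbar r r'| = |g Kbar r r' - g Kbar r' r'| := by
          rw [h.diag0 hr, h.diag0 hr', zero_sub, abs_neg, sub_zero]
        rw [Real.norm_eq_abs, h1]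
        refine ((hlips r' hr' r hr r' hr').1).trans ?_
        exact mul_le_mul_of_nonneg_right hCmE (abs_nonneg _)
      · have h1 : |g1 Kbar r r - g1 Kbar r r'| = |g1 Kbar r' r' - g1 Kbar r r'| := by
          rw [h.diag1 hr, h.diag1 hr']
        rw [Real.norm_eq_abs, h1]
        have := (hlips r' hr' r' hr' r hr).2
        rwa [abs_sub_comm r'] at this
    calc ‖((g Kbar r r - g Kbar r r', g1 Kbar r r - g1 Kbar r r') : ℝ × ℝ)‖
          * Real.exp (Cm * (L - 0))
        ≤ ((Cm * E) * |r - r'|) * E := by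
          rw [← hE]
          exact mul_le_mul_of_nonneg_right hbase hE0.le
      _ = (Cm * E) * |r - r'| * E := rfl
  refine ⟨Cm * E * E, h1le, ?_, ?_, ?_, ?_⟩
  · intro s hs
    refine (hκb s hs).trans ?_
    calc Cm ≤ Cm * E := le_mul_of_one_le_right hCm0 hE1
      _ ≤ Cm * E * E := hCmE2
  · intro r hr s hs
    exact ⟨(hgb r hr s hs).trans hE_le, (hg1b r hr s hs).trans hE_le,
      (hg2b r hr s hs).trans hCmE2⟩
  · intro r hr s hs s' hs'
    obtain ⟨h1, h2⟩ := hlips r hr s hs s' hs'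
    exact ⟨h1.trans (mul_le_mul_of_nonneg_right hE_le (abs_nonneg _)),
      h2.trans (mul_le_mul_of_nonneg_right hCmE2 (abs_nonneg _))⟩
  · intro s hs r hr r' hr'
    have := hlipr s hs r hr r' hr'
    have h1 := (norm_fst_le ((g Kbar s r - g Kbar s r',
      g1 Kbar s r - g1 Kbar s r') : ℝ × ℝ)).trans this
    have h2 := (norm_snd_le ((g Kbar s r - g Kbar s r',
      g1 Kbar s r - g1 Kbar s r') : ℝ × ℝ)).trans this
    constructor
    · refine h1.trans (le_of_eq ?_)
      ring
    · refine h2.trans (le_of_eq ?_)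
      ring

/-- Joint continuity from separate Lipschitz bounds on a square. -/
lemma contOn_of_lip {a b : ℝ} {F : ℝ → ℝ → ℝ} {C : ℝ} (hC : 0 ≤ C)
    (h1 : ∀ r ∈ Icc a b, ∀ s ∈ Icc a b, ∀ s' ∈ Icc a b, |F s r - F s' r| ≤ C * |s - s'|)
    (h2 : ∀ s ∈ Icc a b, ∀ r ∈ Icc a b, ∀ r' ∈ Icc a b, |F s r - F s r'| ≤ C * |r - r'|) :
    ContinuousOn (fun p : ℝ × ℝ => F p.1 p.2) (Icc a b ×ˢ Icc a b) := by
  rw [Metric.continuousOn_iff]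
  intro p hp ε hε
  refine ⟨ε / (2 * C + 1), by positivity, ?_⟩
  intro q hq hd
  rw [Prod.dist_eq, max_lt_iff] at hd
  obtain ⟨hd1, hd2⟩ := hd
  rw [Real.dist_eq] at hd1 hd2 ⊢
  have hq1 : q.1 ∈ Icc a b := hq.1
  have hq2 : q.2 ∈ Icc a b := hq.2
  have hp1 : p.1 ∈ Icc a b := hp.1
  have hp2 : p.2 ∈ Icc a b := hp.2
  have e1 : |F q.1 q.2 - F q.1 p.2| ≤ C * |q.2 - p.2| := h2 q.1 hq1 q.2 hq2 p.2 hp2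
  have e2 : |F q.1 p.2 - F p.1 p.2| ≤ C * |q.1 - p.1| := h1 p.2 hp2 q.1 hq1 p.1 hp1
  have : |F q.1 q.2 - F p.1 p.2| ≤ C * |q.2 - p.2| + C * |q.1 - p.1| := by
    calc |F q.1 q.2 - F p.1 p.2|
        ≤ |F q.1 q.2 - F q.1 p.2| + |F q.1 p.2 - F p.1 p.2| := abs_sub_le _ _ _
      _ ≤ C * |q.2 - p.2| + C * |q.1 - p.1| := add_le_add e1 e2
  have hCd : C * |q.2 - p.2| + C * |q.1 - p.1| < ε := by
    have u1 : C * |q.2 - p.2| ≤ C * (ε / (2 * C + 1)) :=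
      mul_le_mul_of_nonneg_left hd2.le hC
    have u2 : C * |q.1 - p.1| ≤ C * (ε / (2 * C + 1)) :=
      mul_le_mul_of_nonneg_left hd1.le hC
    have : 2 * C * (ε / (2 * C + 1)) < ε := by
      rw [div_eq_inv_mul]
      rw [show 2 * C * ((2 * C + 1)⁻¹ * ε) = (2 * C) / (2 * C + 1) * ε by ring]
      have hlt : (2 * C) / (2 * C + 1) < 1 := by
        rw [div_lt_one (by positivity)]; linarith
      nlinarith
    linarith
  exact lt_of_le_of_lt this hCd

/-- Integrability of a continuous function on a (half-open) square. -/
lemma integrable_sq {a b c d : ℝ} {F : ℝ × ℝ → ℝ}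
    (hF : ContinuousOn F (Icc a b ×ˢ Icc c d)) :
    Integrable F ((volume.restrict (Ioc a b)).prod (volume.restrict (Ioc c d))) := by
  rw [Measure.prod_restrict]
  have h1 : IntegrableOn F (Icc a b ×ˢ Icc c d) volume :=
    hF.integrableOn_compact (isCompact_Icc.prod isCompact_Icc)
  rw [← Measure.volume_eq_prod]
  exact h1.mono_set (prod_mono Ioc_subset_Icc_self Ioc_subset_Icc_self)

/-- Fubini on a rectangle, for interval integrals of a continuous function. -/
lemma rect_swap {a b c d : ℝ} (hab : a ≤ b) (hcd : c ≤ d) {G : ℝ → ℝ → ℝ}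
    (hG : ContinuousOn (fun p : ℝ × ℝ => G p.1 p.2) (Icc a b ×ˢ Icc c d)) :
    ∫ t in a..b, (∫ u in c..d, G t u) = ∫ u in c..d, (∫ t in a..b, G t u) := by
  have hint : Integrable (Function.uncurry G)
      ((volume.restrict (Ioc a b)).prod (volume.restrict (Ioc c d))) :=
    integrable_sq (F := Function.uncurry G) hG
  rw [integral_of_le hab, integral_of_le hcd]
  simp_rw [integral_of_le hcd, integral_of_le hab]
  exact MeasureTheory.integral_integral_swap hint

/-- Fubini on the triangle `0 ≤ s ≤ t ≤ L`. -/
lemma triangle_swap {L : ℝ} (hL0 : 0 ≤ L) {G : ℝ → ℝ → ℝ}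
    (hG : ContinuousOn (fun p : ℝ × ℝ => G p.1 p.2) (Icc 0 L ×ˢ Icc 0 L)) :
    ∫ t in (0:ℝ)..L, (∫ s in (0:ℝ)..t, G t s) = ∫ s in (0:ℝ)..L, (∫ t in s..L, G t s) := by
  set μ := volume.restrict (Ioc (0:ℝ) L) with hμ
  set D : Set (ℝ × ℝ) := {q : ℝ × ℝ | q.2 ≤ q.1} with hDdef
  have hD : MeasurableSet D := measurableSet_le measurable_snd measurable_fst
  set Φ : ℝ × ℝ → ℝ := D.indicator (fun q => G q.1 q.2) with hΦ
  have hΦint : Integrable Φ (μ.prod μ) := by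
    obtain ⟨B, hB⟩ := (isCompact_Icc.prod isCompact_Icc).exists_bound_of_continuousOn hG
    have hmeas : AEStronglyMeasurable (fun q : ℝ × ℝ => G q.1 q.2) (μ.prod μ) := by
      rw [hμ, Measure.prod_restrict]
      exact (hG.mono (prod_mono Ioc_subset_Icc_self Ioc_subset_Icc_self)).aestronglyMeasurable
        (measurableSet_Ioc.prod measurableSet_Ioc)
    refine Integrable.mono' (integrable_const B) (hmeas.indicator hD) ?_
    rw [hμ, Measure.prod_restrict]
    refine (ae_restrict_iff' (measurableSet_Ioc.prod measurableSet_Ioc)).2 (ae_of_all _ ?_)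
    intro z hz
    have hz' : z ∈ Icc (0:ℝ) L ×ˢ Icc (0:ℝ) L :=
      prod_mono Ioc_subset_Icc_self Ioc_subset_Icc_self hz
    by_cases hzD : z ∈ D
    · rw [hΦ, Set.indicator_of_mem hzD]
      exact hB z hz'
    · rw [hΦ, Set.indicator_of_notMem hzD]
      simp only [norm_zero]
      exact (norm_nonneg _).trans (hB z hz')
  have swap := MeasureTheory.integral_integral_swap (f := fun t s => Φ (t, s))
    (by exact hΦint)
  have lhs : ∫ t in (0:ℝ)..L, (∫ s in (0:ℝ)..t, G t s) = ∫ t, (∫ s, Φ (t, s) ∂μ) ∂μ := by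
    rw [integral_of_le hL0]
    refine setIntegral_congr_fun measurableSet_Ioc ?_
    intro t ht
    show (∫ s in (0:ℝ)..t, G t s) = ∫ s, Φ (t, s) ∂μ
    have h1 : (fun s => Φ (t, s)) = (Iic t).indicator (fun s => G t s) := by
      funext s
      by_cases hst : s ≤ t
      · rw [hΦ, Set.indicator_of_mem (by exact hst : (t, s) ∈ D),
          Set.indicator_of_mem (by exact hst)]
      · rw [hΦ, Set.indicator_of_notMem (by exact hst : ¬ (t, s) ∈ D),
          Set.indicator_of_notMem (by exact hst)]
    have h2 : Iic t ∩ Ioc 0 L = Ioc 0 t := by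
      ext z
      simp only [mem_inter_iff, mem_Iic, mem_Ioc]
      exact ⟨fun hh => ⟨hh.2.1, hh.1⟩, fun hh => ⟨hh.2, hh.1, hh.2.trans ht.2⟩⟩
    rw [integral_of_le ht.1.le]
    rw [show (∫ s, Φ (t, s) ∂μ) = ∫ s, (Iic t).indicator (fun s => G t s) s ∂μ by rw [h1]]
    rw [MeasureTheory.integral_indicator measurableSet_Iic, hμ, Measure.restrict_restrict measurableSet_Iic, h2]
  have rhs : ∫ s in (0:ℝ)..L, (∫ t in s..L, G t s) = ∫ s, (∫ t, Φ (t, s) ∂μ) ∂μ := by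
    rw [integral_of_le hL0]
    refine setIntegral_congr_fun measurableSet_Ioc ?_
    intro s hs
    show (∫ t in s..L, G t s) = ∫ t, Φ (t, s) ∂μ
    have h1 : (fun t => Φ (t, s)) = (Ici s).indicator (fun t => G t s) := by
      funext t
      by_cases hst : s ≤ t
      · rw [hΦ, Set.indicator_of_mem (by exact hst : (t, s) ∈ D),
          Set.indicator_of_mem (by exact hst)]
      · rw [hΦ, Set.indicator_of_notMem (by exact hst : ¬ (t, s) ∈ D),
          Set.indicator_of_notMem (by exact hst)]
    have h2 : Ici s ∩ Ioc 0 L = Icc s L := by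
      ext z
      simp only [mem_inter_iff, mem_Ici, mem_Ioc, mem_Icc]
      exact ⟨fun hh => ⟨hh.1, hh.2.2⟩, fun hh => ⟨hh.1, lt_of_lt_of_le hs.1 hh.1, hh.2⟩⟩
    rw [integral_of_le hs.2]
    rw [show (∫ t, Φ (t, s) ∂μ) = ∫ t, (Ici s).indicator (fun t => G t s) t ∂μ by rw [h1]]
    rw [MeasureTheory.integral_indicator measurableSet_Ici, hμ, Measure.restrict_restrict measurableSet_Ici, h2]
    rw [← integral_Icc_eq_integral_Ioc]
  rw [lhs, rhs]
  exact swap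

lemma KD.contg (h : KD L κbar Kbar) (r : ℝ) : Continuous (fun u => g Kbar u r) :=
  (contDiff_deriv3 (h.smooth r)).2.1.continuous

lemma KD.contg1 (h : KD L κbar Kbar) (r : ℝ) : Continuous (fun u => g1 Kbar u r) :=
  (contDiff_deriv3 (h.smooth r)).2.2.1.continuous

lemma KD.ftcK (h : KD L κbar Kbar) (r a b : ℝ) :
    ∫ u in a..b, g Kbar u r = Kbar b r - Kbar a r :=
  integral_eq_sub_of_hasDerivAt (fun x _ => h.hd0 r x)
    ((h.contg r).intervalIntegrable a b)

lemma KD.ftcg (h : KD L κbar Kbar) (r a b : ℝ) :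
    ∫ u in a..b, g1 Kbar u r = g Kbar b r - g Kbar a r :=
  integral_eq_sub_of_hasDerivAt (fun x _ => h.hd1 r x)
    ((h.contg1 r).intervalIntegrable a b)

/-- Duhamel-type representation of the solution of `v'' + κ̄ v = f`, `v 0 = v' 0 = 0`. -/
lemma KD.rep (h : KD L κbar Kbar) {v dv ddv f : ℝ → ℝ}
    (hdv : ∀ s, HasDerivAt v (dv s) s) (hddv : ∀ s, HasDerivAt dv (ddv s) s)
    (hf : ContinuousOn f (Icc 0 L))
    (hode : ∀ s ∈ Icc (0:ℝ) L, ddv s = f s - κbar s * v s)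
    (h0 : v 0 = 0) (h1 : dv 0 = 0) :
    ∀ t ∈ Icc (0:ℝ) L, v t = ∫ s in (0:ℝ)..t, g Kbar t s * f s := by
  intro t ht
  have huIcc : uIcc (0:ℝ) t = Icc 0 t := uIcc_of_le ht.1
  have hsub : Icc (0:ℝ) t ⊆ Icc 0 L := Icc_subset_Icc le_rfl ht.2
  set P : ℝ → ℝ := fun x => g Kbar x t * dv x - g1 Kbar x t * v x with hP
  have hFTC : ∫ x in (0:ℝ)..t, (g Kbar x t * f x) = P t - P 0 := by
    refine integral_eq_sub_of_hasDerivAt ?_ ?_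
    · intro x hx
      have hx' : x ∈ Icc (0:ℝ) L := hsub (huIcc ▸ hx)
      have hder : HasDerivAt P
          ((g1 Kbar x t * dv x + g Kbar x t * ddv x)
            - (g2 Kbar x t * v x + g1 Kbar x t * dv x)) x :=
        ((h.hd1 t x).mul (hddv x)).sub ((h.hd2 t x).mul (hdv x))
      have heq : (g1 Kbar x t * dv x + g Kbar x t * ddv x)
          - (g2 Kbar x t * v x + g1 Kbar x t * dv x) = g Kbar x t * f x := by
        rw [hode x hx', h.ode' ht hx']; ring
      exact heq ▸ hder
    · apply ContinuousOn.intervalIntegrable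
      exact ((h.contg t).continuousOn.mul (hf.mono (huIcc ▸ hsub))).congr (fun x hx => rfl)
  have hPt : P t = - v t := by
    rw [hP]
    simp only [h.diag0 ht, h.diag1 ht]
    ring
  have hP0 : P 0 = 0 := by rw [hP]; simp [h0, h1]
  have hanti : ∀ x ∈ uIcc (0:ℝ) t, g Kbar x t * f x = -(g Kbar t x * f x) := by
    intro x hx
    rw [h.antisym ht (hsub (huIcc ▸ hx))]
    ring
  rw [intervalIntegral.integral_congr hanti, intervalIntegral.integral_neg] at hFTC
  rw [hPt, hP0] at hFTC
  linarith

/-- Joint continuity of `g` on the square. -/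
lemma KD.contg_joint (h : KD L κbar Kbar) :
    ContinuousOn (fun p : ℝ × ℝ => g Kbar p.1 p.2) (Icc 0 L ×ˢ Icc 0 L) := by
  obtain ⟨C, hC1, _, _, hlips, hlipr⟩ := h.master
  exact contOn_of_lip (zero_le_one.trans hC1)
    (fun r hr s hs s' hs' => (hlips r hr s hs s' hs').1)
    (fun s hs r hr r' hr' => (hlipr s hs r hr r' hr').1)

/-- The main representation formula: if `v'' + κ̄ v = f` with zero data and `w' = v`,
`w 0 = 0`, then `w L = ∫₀ᴸ K̄(L,s) f(s) ds`. -/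
lemma KD.main_rep (h : KD L κbar Kbar) {v dv ddv f w : ℝ → ℝ}
    (hdv : ∀ s, HasDerivAt v (dv s) s) (hddv : ∀ s, HasDerivAt dv (ddv s) s)
    (hf : ContinuousOn f (Icc 0 L))
    (hode : ∀ s ∈ Icc (0:ℝ) L, ddv s = f s - κbar s * v s)
    (h0 : v 0 = 0) (h1 : dv 0 = 0)
    (hw : ∀ s, HasDerivAt w (v s) s) (hw0 : w 0 = 0) :
    w L = ∫ s in (0:ℝ)..L, Kbar L s * f s := by
  have hL0 : (0:ℝ) ≤ L := h.hL.le
  have hvc : Continuous v := by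
    rw [continuous_iff_continuousAt]; exact fun x => (hdv x).continuousAt
  have step1 : w L = ∫ t in (0:ℝ)..L, v t := by
    have := integral_eq_sub_of_hasDerivAt (f := w) (f' := v)
      (fun x _ => hw x) (hvc.intervalIntegrable 0 L)
    rw [this, hw0, sub_zero]
  have step2 : ∫ t in (0:ℝ)..L, v t
      = ∫ t in (0:ℝ)..L, (∫ s in (0:ℝ)..t, g Kbar t s * f s) := by
    refine intervalIntegral.integral_congr ?_
    intro t htu
    rw [uIcc_of_le hL0] at htu
    exact h.rep hdv hddv hf hode h0 h1 t htu
  have hGc : ContinuousOn (fun p : ℝ × ℝ => g Kbar p.1 p.2 * f p.2)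
      (Icc 0 L ×ˢ Icc 0 L) := by
    refine (h.contg_joint).mul ?_
    exact hf.comp continuous_snd.continuousOn (fun p hp => hp.2)
  have step3 := triangle_swap hL0 (G := fun t s => g Kbar t s * f s) hGc
  have step4 : ∫ s in (0:ℝ)..L, (∫ t in s..L, g Kbar t s * f s)
      = ∫ s in (0:ℝ)..L, Kbar L s * f s := by
    refine intervalIntegral.integral_congr ?_
    intro s hsu
    rw [uIcc_of_le hL0] at hsu
    show (∫ t in s..L, g Kbar t s * f s) = Kbar L s * f s
    rw [intervalIntegral.integral_mul_const, h.ftcK s s L, h.k0 s hsu, sub_zero]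
  rw [step1, step2, step3, step4]

lemma mem_Icc_of_uIoc {x a b c d : ℝ} (ha : a ∈ Icc c d) (hb : b ∈ Icc c d)
    (hx : x ∈ Set.uIoc a b) : x ∈ Icc c d :=
  ⟨le_trans (le_inf ha.1 hb.1) hx.1.le, hx.2.trans (sup_le ha.2 hb.2)⟩

/-- 1-D Lipschitz implies continuity on the interval. -/
lemma contOn_of_lip1 {a b C : ℝ} {F : ℝ → ℝ} (hC : 0 ≤ C)
    (hlip : ∀ r ∈ Icc a b, ∀ r' ∈ Icc a b, |F r - F r'| ≤ C * |r - r'|) :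
    ContinuousOn F (Icc a b) := by
  rw [Metric.continuousOn_iff]
  intro p hp ε hε
  refine ⟨ε / (C + 1), by positivity, ?_⟩
  intro q hq hd
  rw [Real.dist_eq] at hd ⊢
  have h1 : |F q - F p| ≤ C * |q - p| := hlip q hq p hp
  have h2 : C * |q - p| < ε := by
    have u1 : C * |q - p| ≤ C * (ε / (C + 1)) := mul_le_mul_of_nonneg_left hd.le hC
    have : C * (ε / (C + 1)) < ε := by
      rw [mul_div_assoc']
      rw [div_lt_iff₀ (by positivity)]
      nlinarith
    linarith
  exact lt_of_le_of_lt h1 h2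

/-- Lipschitz continuity of `r ↦ K̄(L, r)`. -/
lemma KD.lipKL (h : KD L κbar Kbar) :
    ∃ C : ℝ, 0 ≤ C ∧ ∀ r ∈ Icc (0:ℝ) L, ∀ r' ∈ Icc (0:ℝ) L,
      |Kbar L r - Kbar L r'| ≤ C * |r - r'| := by
  obtain ⟨C, hC1, hκC, hbd, hlips, hlipr⟩ := h.master
  have hC0 : (0:ℝ) ≤ C := zero_le_one.trans hC1
  have hL0 : (0:ℝ) ≤ L := h.hL.le
  have hLmem : L ∈ Icc (0:ℝ) L := ⟨hL0, le_rfl⟩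
  refine ⟨C + L * C, by positivity, ?_⟩
  intro r hr r' hr'
  have e0 : Kbar L r = ∫ u in r..L, g Kbar u r := by
    rw [h.ftcK r r L, h.k0 r hr, sub_zero]
  have e0' : Kbar L r' = ∫ u in r'..L, g Kbar u r' := by
    rw [h.ftcK r' r' L, h.k0 r' hr', sub_zero]
  have esplit : (∫ u in r'..r, g Kbar u r') + ∫ u in r..L, g Kbar u r'
      = ∫ u in r'..L, g Kbar u r' :=
    intervalIntegral.integral_add_adjacent_intervals
      ((h.contg r').intervalIntegrable _ _) ((h.contg r').intervalIntegrable _ _)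
  have hdiff : Kbar L r - Kbar L r'
      = (∫ u in r..L, (g Kbar u r - g Kbar u r')) - ∫ u in r'..r, g Kbar u r' := by
    rw [e0, e0', ← esplit, intervalIntegral.integral_sub
      ((h.contg r).intervalIntegrable _ _) ((h.contg r').intervalIntegrable _ _)]
    ring
  have b1 : |∫ u in r..L, (g Kbar u r - g Kbar u r')| ≤ (C * |r - r'|) * L := by
    have hb := intervalIntegral.norm_integral_le_of_norm_le_const
      (C := C * |r - r'|) (a := r) (b := L)
      (f := fun u => g Kbar u r - g Kbar u r')
      (fun x hx => (hlipr x (mem_Icc_of_uIoc hr hLmem hx) r hr r' hr').1)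
    rw [Real.norm_eq_abs] at hb
    refine hb.trans ?_
    have hLr : |L - r| ≤ L := by
      rw [abs_of_nonneg (by linarith [hr.2])]
      linarith [hr.1]
    exact mul_le_mul_of_nonneg_left hLr (by positivity)
  have b2 : |∫ u in r'..r, g Kbar u r'| ≤ C * |r - r'| := by
    have hb := intervalIntegral.norm_integral_le_of_norm_le_const
      (C := C) (a := r') (b := r) (f := fun u => g Kbar u r')
      (fun x hx => (hbd r' hr' x (mem_Icc_of_uIoc hr' hr hx)).1)
    rw [Real.norm_eq_abs] at hb
    exact hb
  calc |Kbar L r - Kbar L r'|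
      ≤ |∫ u in r..L, (g Kbar u r - g Kbar u r')| + |∫ u in r'..r, g Kbar u r'| := by
        rw [hdiff]; exact abs_sub _ _
    _ ≤ (C * |r - r'|) * L + C * |r - r'| := add_le_add b1 b2
    _ = (C + L * C) * |r - r'| := by ring

lemma KD.contKL (h : KD L κbar Kbar) : ContinuousOn (fun r => Kbar L r) (Icc 0 L) := by
  obtain ⟨C, hC0, hlip⟩ := h.lipKL
  exact contOn_of_lip1 hC0 hlip

lemma KD.contg2 (h : KD L κbar Kbar) (r : ℝ) : Continuous (fun u => g2 Kbar u r) :=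
  (contDiff_deriv3 (h.smooth r)).2.2.2

lemma KD.ftcg1 (h : KD L κbar Kbar) (r a b : ℝ) :
    ∫ u in a..b, g2 Kbar u r = g1 Kbar b r - g1 Kbar a r :=
  integral_eq_sub_of_hasDerivAt (fun x _ => h.hd2 r x)
    ((h.contg2 r).intervalIntegrable a b)

/-- Joint continuity of `g1` on the square. -/
lemma KD.contg1_joint (h : KD L κbar Kbar) :
    ContinuousOn (fun p : ℝ × ℝ => g1 Kbar p.1 p.2) (Icc 0 L ×ˢ Icc 0 L) := by
  obtain ⟨C, hC1, _, _, hlips, hlipr⟩ := h.master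
  exact contOn_of_lip (zero_le_one.trans hC1)
    (fun r hr s hs s' hs' => (hlips r hr s hs s' hs').2)
    (fun s hs r hr r' hr' => (hlipr s hs r hr r' hr').2)

/-- the auxiliary function `q r = ∫_r^L ∂₁g(r,u) du`. -/
noncomputable def qf (Kbar : ℝ → ℝ → ℝ) (L : ℝ) (r : ℝ) : ℝ := ∫ u in r..L, g1 Kbar r u

lemma KD.contg1_snd (h : KD L κbar Kbar) {r : ℝ} (hr : r ∈ Icc (0:ℝ) L) :
    ContinuousOn (fun u => g1 Kbar r u) (Icc 0 L) := by
  obtain ⟨C, hC1, _, _, _, hlipr⟩ := h.master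
  exact contOn_of_lip1 (zero_le_one.trans hC1)
    (fun u hu u' hu' => (hlipr r hr u hu u' hu').2)

lemma KD.contg_snd (h : KD L κbar Kbar) {r : ℝ} (hr : r ∈ Icc (0:ℝ) L) :
    ContinuousOn (fun u => g Kbar r u) (Icc 0 L) := by
  obtain ⟨C, hC1, _, _, _, hlipr⟩ := h.master
  exact contOn_of_lip1 (zero_le_one.trans hC1)
    (fun u hu u' hu' => (hlipr r hr u hu u' hu').1)

lemma KD.intg1_snd (h : KD L κbar Kbar) {r x y : ℝ} (hr : r ∈ Icc (0:ℝ) L)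
    (hx : x ∈ Icc (0:ℝ) L) (hy : y ∈ Icc (0:ℝ) L) :
    IntervalIntegrable (fun u => g1 Kbar r u) volume x y :=
  ((h.contg1_snd hr).mono (uIcc_subset_Icc hx hy)).intervalIntegrable

lemma KD.intg_snd (h : KD L κbar Kbar) {r x y : ℝ} (hr : r ∈ Icc (0:ℝ) L)
    (hx : x ∈ Icc (0:ℝ) L) (hy : y ∈ Icc (0:ℝ) L) :
    IntervalIntegrable (fun u => g Kbar r u) volume x y :=
  ((h.contg_snd hr).mono (uIcc_subset_Icc hx hy)).intervalIntegrable

lemma KD.contq (h : KD L κbar Kbar) : ContinuousOn (qf Kbar L) (Icc 0 L) := by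
  obtain ⟨C, hC1, hκC, hbd, hlips, hlipr⟩ := h.master
  have hC0 : (0:ℝ) ≤ C := zero_le_one.trans hC1
  have hL0 : (0:ℝ) ≤ L := h.hL.le
  have hLmem : L ∈ Icc (0:ℝ) L := ⟨hL0, le_rfl⟩
  refine contOn_of_lip1 (C := C * L + C) (by positivity) ?_
  intro r hr r' hr'
  have esplit : (∫ u in r'..r, g1 Kbar r' u) + ∫ u in r..L, g1 Kbar r' u
      = ∫ u in r'..L, g1 Kbar r' u :=
    intervalIntegral.integral_add_adjacent_intervals
      (h.intg1_snd hr' hr' hr) (h.intg1_snd hr' hr hLmem)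
  have hdiff : qf Kbar L r - qf Kbar L r'
      = (∫ u in r..L, (g1 Kbar r u - g1 Kbar r' u)) - ∫ u in r'..r, g1 Kbar r' u := by
    unfold qf
    rw [← esplit, intervalIntegral.integral_sub (h.intg1_snd hr hr hLmem)
      (h.intg1_snd hr' hr hLmem)]
    ring
  have b1 : |∫ u in r..L, (g1 Kbar r u - g1 Kbar r' u)| ≤ (C * |r - r'|) * L := by
    have hb := intervalIntegral.norm_integral_le_of_norm_le_const
      (C := C * |r - r'|) (a := r) (b := L)
      (f := fun u => g1 Kbar r u - g1 Kbar r' u)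
      (fun x hx => (hlips x (mem_Icc_of_uIoc hr hLmem hx) r hr r' hr').2)
    rw [Real.norm_eq_abs] at hb
    refine hb.trans ?_
    have hLr : |L - r| ≤ L := by
      rw [abs_of_nonneg (by linarith [hr.2])]
      linarith [hr.1]
    exact mul_le_mul_of_nonneg_left hLr (by positivity)
  have b2 : |∫ u in r'..r, g1 Kbar r' u| ≤ C * |r - r'| := by
    have hb := intervalIntegral.norm_integral_le_of_norm_le_const
      (C := C) (a := r') (b := r) (f := fun u => g1 Kbar r' u)
      (fun x hx => (hbd x (mem_Icc_of_uIoc hr' hr hx) r' hr').2.1)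
    rw [Real.norm_eq_abs] at hb
    exact hb
  calc |qf Kbar L r - qf Kbar L r'|
      ≤ |∫ u in r..L, (g1 Kbar r u - g1 Kbar r' u)| + |∫ u in r'..r, g1 Kbar r' u| := by
        rw [hdiff]; exact abs_sub _ _
    _ ≤ (C * |r - r'|) * L + C * |r - r'| := add_le_add b1 b2
    _ = (C * L + C) * |r - r'| := by ring

/-- If `K̄(L, ·)` vanishes on `[a,b] ⊆ [0,L]` then `q` vanishes on `[a,b)`. -/
lemma KD.qzero (h : KD L κbar Kbar) {a b : ℝ} (hab : a < b)
    (ha : a ∈ Icc (0:ℝ) L) (hb : b ∈ Icc (0:ℝ) L)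
    (hp : ∀ r ∈ Icc a b, Kbar L r = 0) :
    ∀ r₀ ∈ Ico a b, qf Kbar L r₀ = 0 := by
  obtain ⟨C, hC1, hκC, hbd, hlips, hlipr⟩ := h.master
  have hC0 : (0:ℝ) ≤ C := zero_le_one.trans hC1
  have hL0 : (0:ℝ) ≤ L := h.hL.le
  have hLmem : L ∈ Icc (0:ℝ) L := ⟨hL0, le_rfl⟩
  have hIcc : Icc a b ⊆ Icc (0:ℝ) L := Icc_subset_Icc ha.1 hb.2
  have hpzero : ∀ t ∈ Icc a b, (∫ u in t..L, g Kbar u t) = 0 := by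
    intro t ht
    rw [h.ftcK t t L, hp t ht, h.k0 t (hIcc ht), sub_zero]
  -- main smallness estimate
  have hsmall : ∀ r₀ ∈ Ico a b, ∀ r ∈ Ioc r₀ b,
      |∫ t in r₀..r, qf Kbar L t| ≤ 2 * C * ((r - r₀) ^ 2) := by
    intro r₀ hr₀ r hr
    have hr₀ab : r₀ ∈ Icc a b := ⟨hr₀.1, hr₀.2.le⟩
    have hrab : r ∈ Icc a b := ⟨hr₀.1.trans hr.1.le, hr.2⟩
    have hr₀L : r₀ ∈ Icc (0:ℝ) L := hIcc hr₀ab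
    have hrL : r ∈ Icc (0:ℝ) L := hIcc hrab
    have hr₀r : r₀ ≤ r := hr.1.le
    have hsub1 : Icc r₀ r ⊆ Icc (0:ℝ) L := Icc_subset_Icc hr₀L.1 hrL.2
    have hΔ0 : 0 ≤ r - r₀ := by linarith
    set A := ∫ u in r₀..r, g Kbar u r₀ with hAdef
    have hA : |A| ≤ (C * (r - r₀)) * (r - r₀) := by
      have hbnd := intervalIntegral.norm_integral_le_of_norm_le_const
        (C := C * (r - r₀)) (a := r₀) (b := r) (f := fun u => g Kbar u r₀) ?_
      · rw [Real.norm_eq_abs, abs_of_nonneg hΔ0] at hbnd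
        exact hbnd
      · intro u hu
        rw [uIoc_of_le hr₀r] at hu
        have huL : u ∈ Icc (0:ℝ) L := hsub1 (Ioc_subset_Icc_self hu)
        have h1 := (hlips r₀ hr₀L u huL r₀ hr₀L).1
        rw [h.diag0 hr₀L, sub_zero] at h1
        rw [Real.norm_eq_abs]
        refine h1.trans ?_
        have : |u - r₀| ≤ r - r₀ := by
          rw [abs_of_nonneg (by linarith [hu.1.le])]
          linarith [hu.2]
        exact mul_le_mul_of_nonneg_left this hC0
    have hsplit : A + (∫ u in r..L, g Kbar u r₀) = ∫ u in r₀..L, g Kbar u r₀ :=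
      intervalIntegral.integral_add_adjacent_intervals
        ((h.contg r₀).intervalIntegrable _ _) ((h.contg r₀).intervalIntegrable _ _)
    have key1 : (∫ u in r..L, (g Kbar u r - g Kbar u r₀)) = A := by
      rw [intervalIntegral.integral_sub ((h.contg r).intervalIntegrable _ _)
        ((h.contg r₀).intervalIntegrable _ _)]
      have e1 : (∫ u in r..L, g Kbar u r) = 0 := hpzero r hrab
      have e2 : (∫ u in r₀..L, g Kbar u r₀) = 0 := hpzero r₀ hr₀ab
      rw [e1]
      rw [e2] at hsplit
      linarith
    have hpoint : ∀ u ∈ uIcc r L, g Kbar u r - g Kbar u r₀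
        = -(∫ t in r₀..r, g1 Kbar t u) := by
      intro u hu
      have huL : u ∈ Icc (0:ℝ) L := uIcc_subset_Icc hrL hLmem hu
      rw [h.antisym hrL huL, h.antisym hr₀L huL, h.ftcg u r₀ r]
      ring
    have key2 : A = -(∫ u in r..L, (∫ t in r₀..r, g1 Kbar t u)) := by
      rw [← key1, intervalIntegral.integral_congr hpoint, intervalIntegral.integral_neg]
    have hGswap : ContinuousOn (fun p : ℝ × ℝ => g1 Kbar p.2 p.1) (Icc r L ×ˢ Icc r₀ r) := by
      refine h.contg1_joint.comp continuous_swap.continuousOn ?_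
      intro pp hpp
      exact ⟨hsub1 hpp.2, Icc_subset_Icc hrL.1 le_rfl hpp.1⟩
    have hswap := rect_swap (a := r) (b := L) (c := r₀) (d := r) hrL.2 hr₀r
      (G := fun u t => g1 Kbar t u) hGswap
    set I : ℝ → ℝ := fun t => ∫ u in r..L, g1 Kbar t u with hIdef
    have hswap' : (∫ u in r..L, (∫ t in r₀..r, g1 Kbar t u)) = ∫ t in r₀..r, I t := by
      simpa using hswap
    have hIA : (∫ t in r₀..r, I t) = -A := by
      rw [key2, hswap', neg_neg]
    have hIcont : ContinuousOn I (Icc 0 L) := by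
      refine contOn_of_lip1 (C := C * L) (by positivity) ?_
      intro t ht t' ht'
      have : I t - I t' = ∫ u in r..L, (g1 Kbar t u - g1 Kbar t' u) := by
        rw [intervalIntegral.integral_sub (h.intg1_snd ht hrL hLmem)
          (h.intg1_snd ht' hrL hLmem)]
      rw [this]
      have hbnd := intervalIntegral.norm_integral_le_of_norm_le_const
        (C := C * |t - t'|) (a := r) (b := L)
        (f := fun u => g1 Kbar t u - g1 Kbar t' u)
        (fun x hx => (hlips x (mem_Icc_of_uIoc hrL hLmem hx) t ht t' ht').2)
      rw [Real.norm_eq_abs] at hbnd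
      refine hbnd.trans ?_
      have hLr : |L - r| ≤ L := by
        rw [abs_of_nonneg (by linarith [hrL.2])]
        linarith [hrL.1]
      calc C * |t - t'| * |L - r| ≤ C * |t - t'| * L :=
            mul_le_mul_of_nonneg_left hLr (by positivity)
        _ = C * L * |t - t'| := by ring
    have hqsplit : ∀ t ∈ uIcc r₀ r, qf Kbar L t - I t = ∫ u in t..r, g1 Kbar t u := by
      intro t ht
      have htL : t ∈ Icc (0:ℝ) L := uIcc_subset_Icc hr₀L hrL ht
      have := intervalIntegral.integral_add_adjacent_intervals
        (h.intg1_snd htL htL hrL) (h.intg1_snd htL hrL hLmem)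
      unfold qf
      rw [hIdef]
      simp only
      linarith [this]
    have hqint : IntervalIntegrable (qf Kbar L) volume r₀ r :=
      ((h.contq).mono (uIcc_subset_Icc hr₀L hrL)).intervalIntegrable
    have hIint : IntervalIntegrable I volume r₀ r :=
      (hIcont.mono (uIcc_subset_Icc hr₀L hrL)).intervalIntegrable
    have hqI : (∫ t in r₀..r, qf Kbar L t)
        = (∫ t in r₀..r, I t) + ∫ t in r₀..r, (qf Kbar L t - I t) := by
      rw [intervalIntegral.integral_sub hqint hIint]
      ring
    have hJ : |∫ t in r₀..r, (qf Kbar L t - I t)| ≤ (C * (r - r₀)) * (r - r₀) := by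
      have hbnd := intervalIntegral.norm_integral_le_of_norm_le_const
        (C := C * (r - r₀)) (a := r₀) (b := r)
        (f := fun t => qf Kbar L t - I t) ?_
      · rw [Real.norm_eq_abs, abs_of_nonneg hΔ0] at hbnd
        exact hbnd
      · intro t ht
        rw [uIoc_of_le hr₀r] at ht
        have htu : t ∈ uIcc r₀ r := by
          rw [uIcc_of_le hr₀r]; exact Ioc_subset_Icc_self ht
        have htL : t ∈ Icc (0:ℝ) L := hsub1 (Ioc_subset_Icc_self ht)
        show ‖qf Kbar L t - I t‖ ≤ C * (r - r₀)
        rw [Real.norm_eq_abs, hqsplit t htu]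
        have htr : t ≤ r := ht.2
        have hbnd2 := intervalIntegral.norm_integral_le_of_norm_le_const
          (C := C) (a := t) (b := r) (f := fun u => g1 Kbar t u)
          (fun x hx => (hbd x (mem_Icc_of_uIoc htL hrL hx) t htL).2.1)
        rw [Real.norm_eq_abs] at hbnd2
        refine hbnd2.trans ?_
        have : |r - t| ≤ r - r₀ := by
          rw [abs_of_nonneg (by linarith)]
          linarith [ht.1.le]
        exact mul_le_mul_of_nonneg_left this hC0
    calc |∫ t in r₀..r, qf Kbar L t|
        ≤ |∫ t in r₀..r, I t| + |∫ t in r₀..r, (qf Kbar L t - I t)| := by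
          rw [hqI]; exact abs_add_le _ _
      _ ≤ (C * (r - r₀)) * (r - r₀) + (C * (r - r₀)) * (r - r₀) := by
          refine add_le_add ?_ hJ
          rw [hIA, abs_neg]
          exact hA
      _ = 2 * C * ((r - r₀) ^ 2) := by ring
  -- conclude q r₀ = 0 from the smallness estimate and continuity of q
  intro r₀ hr₀
  have hr₀L : r₀ ∈ Icc (0:ℝ) L := hIcc ⟨hr₀.1, hr₀.2.le⟩
  by_contra hq0ne
  have hcpos : 0 < |qf Kbar L r₀| := abs_pos.2 hq0ne
  set c := |qf Kbar L r₀| with hcdef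
  have hcw := h.contq r₀ hr₀L
  rw [Metric.continuousWithinAt_iff] at hcw
  obtain ⟨δ, hδ0, hδ⟩ := hcw (c / 2) (by positivity)
  set Δ := min (b - r₀) (min (δ / 2) (c / (8 * C))) with hΔdef
  have hΔpos : 0 < Δ := by
    refine lt_min (by linarith [hr₀.2]) (lt_min (by positivity) (by positivity))
  set r := r₀ + Δ with hrdef
  have hrIoc : r ∈ Ioc r₀ b := by
    constructor
    · linarith
    · have : Δ ≤ b - r₀ := min_le_left _ _
      linarith
  have hrL : r ∈ Icc (0:ℝ) L := by
    constructor
    · linarith [hr₀L.1, hΔpos.le]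
    · linarith [hb.2, hrIoc.2]
  have hq1 := hsmall r₀ hr₀ r hrIoc
  have hE : |∫ t in r₀..r, (qf Kbar L t - qf Kbar L r₀)| ≤ (c / 2) * Δ := by
    have hbnd := intervalIntegral.norm_integral_le_of_norm_le_const
      (C := c / 2) (a := r₀) (b := r)
      (f := fun t => qf Kbar L t - qf Kbar L r₀) ?_
    · rw [Real.norm_eq_abs] at hbnd
      refine hbnd.trans (le_of_eq ?_)
      rw [hrdef]
      rw [abs_of_nonneg (by linarith)]
      ring_nf
    · intro t ht
      rw [uIoc_of_le (by linarith : r₀ ≤ r)] at ht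
      have htL : t ∈ Icc (0:ℝ) L := by
        constructor
        · linarith [hr₀L.1, ht.1.le]
        · linarith [hrL.2, ht.2]
      have hdist : dist t r₀ < δ := by
        rw [Real.dist_eq, abs_of_nonneg (by linarith [ht.1.le])]
        have h1 : t - r₀ ≤ Δ := by linarith [ht.2]
        have h2 : Δ ≤ δ / 2 := (min_le_right _ _).trans (min_le_left _ _)
        linarith
      have := hδ htL hdist
      rw [Real.dist_eq] at this
      rw [Real.norm_eq_abs]
      exact this.le
  have hconst : (∫ t in r₀..r, qf Kbar L r₀) = Δ * qf Kbar L r₀ := by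
    rw [intervalIntegral.integral_const, smul_eq_mul, hrdef]
    ring_nf
  have hqint : IntervalIntegrable (qf Kbar L) volume r₀ r :=
    ((h.contq).mono (uIcc_subset_Icc hr₀L hrL)).intervalIntegrable
  have hsplit2 : (∫ t in r₀..r, (qf Kbar L t - qf Kbar L r₀))
      = (∫ t in r₀..r, qf Kbar L t) - Δ * qf Kbar L r₀ := by
    rw [intervalIntegral.integral_sub hqint (intervalIntegrable_const), hconst]
  have habs : Δ * c ≤ 2 * C * Δ ^ 2 + (c / 2) * Δ := by
    have h1 : |Δ * qf Kbar L r₀| = Δ * c := by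
      rw [abs_mul, abs_of_nonneg hΔpos.le]
    have h2 : Δ * qf Kbar L r₀
        = (∫ t in r₀..r, qf Kbar L t) - ∫ t in r₀..r, (qf Kbar L t - qf Kbar L r₀) := by
      rw [hsplit2]; ring
    have h3 : |Δ * qf Kbar L r₀| ≤ |∫ t in r₀..r, qf Kbar L t|
        + |∫ t in r₀..r, (qf Kbar L t - qf Kbar L r₀)| := by
      rw [h2]; exact abs_sub _ _
    rw [h1] at h3
    have h4 : (r - r₀) ^ 2 = Δ ^ 2 := by rw [hrdef]; ring
    rw [h4] at hq1
    linarith [h3.trans (add_le_add hq1 hE)]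
  have hΔc : Δ ≤ c / (8 * C) := (min_le_right _ _).trans (min_le_right _ _)
  have e1 : (c / 2) * Δ ≤ (2 * C * Δ) * Δ := by nlinarith [habs]
  have e2 : c / 2 ≤ 2 * C * Δ := (mul_le_mul_iff_left₀ hΔpos).mp e1
  have hCne : C ≠ 0 := by positivity
  have e3 : 2 * C * Δ ≤ c / 4 := by
    have h3 : 2 * C * Δ ≤ 2 * C * (c / (8 * C)) :=
      mul_le_mul_of_nonneg_left hΔc (by positivity)
    have h4 : 2 * C * (c / (8 * C)) = c / 4 := by
      field_simp
      ring
    rw [h4] at h3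
    exact h3
  linarith

/-- `K̄(L, ·)` cannot vanish identically on a nondegenerate subinterval of `[0,L]`. -/
lemma KD.no_flat (h : KD L κbar Kbar) {a b : ℝ} (hab : a < b)
    (ha : a ∈ Icc (0:ℝ) L) (hb : b ∈ Icc (0:ℝ) L)
    (hp : ∀ r ∈ Icc a b, Kbar L r = 0) : False := by
  obtain ⟨C, hC1, hκC, hbd, hlips, hlipr⟩ := h.master
  have hC0 : (0:ℝ) ≤ C := zero_le_one.trans hC1
  have hL0 : (0:ℝ) ≤ L := h.hL.le
  have hLmem : L ∈ Icc (0:ℝ) L := ⟨hL0, le_rfl⟩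
  have hIcc : Icc a b ⊆ Icc (0:ℝ) L := Icc_subset_Icc ha.1 hb.2
  have hqz := h.qzero hab ha hb hp
  set Δ := min ((b - a) / 2) (min 1 (1 / (2 * (C ^ 2 + C)))) with hΔdef
  have hΔpos : 0 < Δ :=
    lt_min (by linarith) (lt_min one_pos (by positivity))
  have hΔ1 : Δ ≤ 1 := (min_le_right _ _).trans (min_le_left _ _)
  have hΔC : Δ ≤ 1 / (2 * (C ^ 2 + C)) := (min_le_right _ _).trans (min_le_right _ _)
  have hΔba : Δ ≤ (b - a) / 2 := min_le_left _ _
  set r := a + Δ with hrdef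
  have har : a ≤ r := by rw [hrdef]; linarith
  have hrIco : r ∈ Ico a b := ⟨har.trans' (le_refl a), by rw [hrdef]; linarith⟩
  have haL : a ∈ Icc (0:ℝ) L := ha
  have hrL : r ∈ Icc (0:ℝ) L := hIcc ⟨har, hrIco.2.le⟩
  have hqa : qf Kbar L a = 0 := hqz a ⟨le_rfl, hab⟩
  have hqr : qf Kbar L r = 0 := hqz r hrIco
  set T2 := ∫ u in a..r, g1 Kbar a u with hT2def
  have hsplitq : T2 + (∫ u in r..L, g1 Kbar a u) = ∫ u in a..L, g1 Kbar a u :=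
    intervalIntegral.integral_add_adjacent_intervals
      (h.intg1_snd haL haL hrL) (h.intg1_snd haL hrL hLmem)
  have hqa' : (∫ u in a..L, g1 Kbar a u) = 0 := hqa
  have hT1T2 : (∫ u in r..L, (g1 Kbar r u - g1 Kbar a u)) = T2 := by
    rw [intervalIntegral.integral_sub (h.intg1_snd hrL hrL hLmem)
      (h.intg1_snd haL hrL hLmem)]
    have e1 : (∫ u in r..L, g1 Kbar r u) = 0 := hqr
    rw [e1]
    rw [hqa'] at hsplitq
    linarith
  -- T2 is approximately Δ
  have hone : (∫ u in a..r, (1:ℝ)) = Δ := by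
    rw [intervalIntegral.integral_const, smul_eq_mul, hrdef]
    ring
  have hT2e : |T2 - Δ| ≤ C * Δ * Δ := by
    have hsub : T2 - Δ = ∫ u in a..r, (g1 Kbar a u - 1) := by
      rw [intervalIntegral.integral_sub (h.intg1_snd haL haL hrL)
        intervalIntegrable_const, hone]
    rw [hsub]
    have hbnd := intervalIntegral.norm_integral_le_of_norm_le_const
      (C := C * Δ) (a := a) (b := r) (f := fun u => g1 Kbar a u - 1) ?_
    · rw [Real.norm_eq_abs] at hbnd
      refine hbnd.trans (le_of_eq ?_)
      rw [hrdef, show a + Δ - a = Δ by ring, abs_of_nonneg hΔpos.le]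
    · intro u hu
      rw [uIoc_of_le har] at hu
      have huL : u ∈ Icc (0:ℝ) L :=
        (Icc_subset_Icc haL.1 hrL.2) (Ioc_subset_Icc_self hu)
      have h1 := (hlips u huL a haL u huL).2
      rw [h.diag1 huL] at h1
      rw [Real.norm_eq_abs]
      refine h1.trans ?_
      have : |a - u| ≤ Δ := by
        rw [abs_sub_comm, abs_of_nonneg (by linarith [hu.1.le])]
        have := hu.2
        rw [hrdef] at this
        linarith
      exact mul_le_mul_of_nonneg_left this hC0
  -- T1 is O(Δ³)
  have hpoint : ∀ u ∈ uIcc r L, g1 Kbar r u - g1 Kbar a u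
      = ∫ t in a..r, -(κbar t * g Kbar t u) := by
    intro u hu
    have huL : u ∈ Icc (0:ℝ) L := uIcc_subset_Icc hrL hLmem hu
    rw [← h.ftcg1 u a r]
    refine intervalIntegral.integral_congr ?_
    intro t ht
    have htL : t ∈ Icc (0:ℝ) L := uIcc_subset_Icc haL hrL ht
    exact h.ode' huL htL
  have hGswap : ContinuousOn (fun p : ℝ × ℝ => κbar p.2 * g Kbar p.2 p.1)
      (Icc r L ×ˢ Icc a r) := by
    have hsub2 : Icc a r ⊆ Icc (0:ℝ) L := Icc_subset_Icc haL.1 hrL.2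
    have hsub3 : Icc r L ⊆ Icc (0:ℝ) L := Icc_subset_Icc hrL.1 le_rfl
    refine ContinuousOn.mul ?_ ?_
    · exact h.hκ.comp continuous_snd.continuousOn (fun pp hpp => hsub2 hpp.2)
    · exact h.contg_joint.comp continuous_swap.continuousOn
        (fun pp hpp => ⟨hsub2 hpp.2, hsub3 hpp.1⟩)
  have hswap := rect_swap (a := r) (b := L) (c := a) (d := r) hrL.2 har
    (G := fun u t => κbar t * g Kbar t u) hGswap
  have hT1eq : (∫ u in r..L, (g1 Kbar r u - g1 Kbar a u))
      = -∫ t in a..r, (∫ u in r..L, (κbar t * g Kbar t u)) := by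
    rw [intervalIntegral.integral_congr hpoint]
    have : (∫ u in r..L, (∫ t in a..r, -(κbar t * g Kbar t u)))
        = ∫ u in r..L, (-(∫ t in a..r, (κbar t * g Kbar t u))) := by
      refine intervalIntegral.integral_congr ?_
      intro u hu
      exact intervalIntegral.integral_neg
    rw [this, intervalIntegral.integral_neg, hswap]
  have hW : ∀ t ∈ Set.uIoc a r, |∫ u in r..L, g Kbar t u| ≤ C * Δ * Δ := by
    intro t ht
    rw [uIoc_of_le har] at ht
    have htab : t ∈ Icc a b := ⟨ht.1.le, ht.2.trans hrIco.2.le⟩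
    have htL : t ∈ Icc (0:ℝ) L := hIcc htab
    have htr : t ≤ r := ht.2
    have hadj : (∫ u in t..r, g Kbar t u) + (∫ u in r..L, g Kbar t u)
        = ∫ u in t..L, g Kbar t u :=
      intervalIntegral.integral_add_adjacent_intervals
        (h.intg_snd htL htL hrL) (h.intg_snd htL hrL hLmem)
    have hzero : (∫ u in t..L, g Kbar t u) = 0 := by
      have hcong : ∀ u ∈ uIcc t L, g Kbar t u = -(g Kbar u t) := by
        intro u hu
        have huL : u ∈ Icc (0:ℝ) L := uIcc_subset_Icc htL hLmem hu
        rw [h.antisym huL htL]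
      rw [intervalIntegral.integral_congr hcong, intervalIntegral.integral_neg,
        h.ftcK t t L, hp t htab, h.k0 t htL]
      ring
    have hsmallint : |∫ u in t..r, g Kbar t u| ≤ (C * Δ) * Δ := by
      have hbnd := intervalIntegral.norm_integral_le_of_norm_le_const
        (C := C * Δ) (a := t) (b := r) (f := fun u => g Kbar t u) ?_
      · rw [Real.norm_eq_abs] at hbnd
        refine hbnd.trans ?_
        have : |r - t| ≤ Δ := by
          rw [abs_of_nonneg (by linarith)]
          rw [hrdef]
          linarith [ht.1]
        exact mul_le_mul_of_nonneg_left this (by positivity)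
      · intro u hu
        have huL : u ∈ Icc (0:ℝ) L := mem_Icc_of_uIoc htL hrL hu
        have h1 := (hlips u huL t htL u huL).1
        rw [h.diag0 huL, sub_zero] at h1
        rw [Real.norm_eq_abs]
        refine h1.trans ?_
        have hu' : u ∈ Set.Ioc t r := by rwa [uIoc_of_le htr] at hu
        have : |t - u| ≤ Δ := by
          rw [abs_sub_comm, abs_of_nonneg (by linarith [hu'.1.le])]
          have h5 : u ≤ a + Δ := by
            have := hu'.2
            rw [hrdef] at this
            exact this
          linarith [ht.1]
        exact mul_le_mul_of_nonneg_left this hC0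
    have : (∫ u in r..L, g Kbar t u) = -(∫ u in t..r, g Kbar t u) := by
      rw [hzero] at hadj
      linarith
    rw [this, abs_neg]
    exact hsmallint
  have hT1 : |∫ u in r..L, (g1 Kbar r u - g1 Kbar a u)| ≤ (C * (C * Δ * Δ)) * Δ := by
    rw [hT1eq, abs_neg]
    have hbnd := intervalIntegral.norm_integral_le_of_norm_le_const
      (C := C * (C * Δ * Δ)) (a := a) (b := r)
      (f := fun t => ∫ u in r..L, (κbar t * g Kbar t u)) ?_
    · rw [Real.norm_eq_abs] at hbnd
      refine hbnd.trans (le_of_eq ?_)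
      rw [hrdef, show a + Δ - a = Δ by ring, abs_of_nonneg hΔpos.le]
    · intro t ht
      have htL : t ∈ Icc (0:ℝ) L :=
        (Icc_subset_Icc haL.1 hrL.2) (by rw [uIoc_of_le har] at ht; exact Ioc_subset_Icc_self ht)
      have hmul : (∫ u in r..L, (κbar t * g Kbar t u))
          = κbar t * ∫ u in r..L, g Kbar t u := intervalIntegral.integral_const_mul _ _
      show ‖∫ u in r..L, (κbar t * g Kbar t u)‖ ≤ C * (C * Δ * Δ)
      rw [Real.norm_eq_abs, hmul, abs_mul]
      exact mul_le_mul (hκC t htL) (hW t ht) (abs_nonneg _) hC0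
  -- combine
  have hfinal : Δ ≤ C * Δ * Δ + (C * (C * Δ * Δ)) * Δ := by
    calc Δ = (Δ - T2) + (∫ u in r..L, (g1 Kbar r u - g1 Kbar a u)) := by
          rw [hT1T2]; ring
      _ ≤ |(Δ - T2) + (∫ u in r..L, (g1 Kbar r u - g1 Kbar a u))| := le_abs_self _
      _ ≤ |Δ - T2| + |∫ u in r..L, (g1 Kbar r u - g1 Kbar a u)| := abs_add_le _ _
      _ ≤ C * Δ * Δ + (C * (C * Δ * Δ)) * Δ := by
          rw [abs_sub_comm]
          exact add_le_add hT2e hT1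
  have hpow : (C * (C * Δ * Δ)) * Δ ≤ C ^ 2 * Δ * Δ := by
    have : (C * (C * Δ * Δ)) * Δ = (C ^ 2 * Δ) * (Δ * Δ) := by ring
    rw [this]
    have hΔΔ : Δ * Δ ≤ Δ := by nlinarith
    calc (C ^ 2 * Δ) * (Δ * Δ) ≤ (C ^ 2 * Δ) * Δ :=
          mul_le_mul_of_nonneg_left hΔΔ (by positivity)
      _ = C ^ 2 * Δ * Δ := rfl
  have hcomb : Δ ≤ (C ^ 2 + C) * Δ * Δ := by nlinarith [hfinal, hpow]
  have hone' : (1:ℝ) * Δ ≤ ((C ^ 2 + C) * Δ) * Δ := by nlinarith [hcomb]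
  have h2 : (1:ℝ) ≤ (C ^ 2 + C) * Δ := (mul_le_mul_iff_left₀ hΔpos).mp hone'
  have h3 : (C ^ 2 + C) * Δ ≤ (C ^ 2 + C) * (1 / (2 * (C ^ 2 + C))) :=
    mul_le_mul_of_nonneg_left hΔC (by positivity)
  have h4 : (C ^ 2 + C) * (1 / (2 * (C ^ 2 + C))) = 1 / 2 := by
    have : C ^ 2 + C ≠ 0 := by positivity
    field_simp
  linarith

/-- A nonnegative continuous function on `[a,b]` with zero integral vanishes. -/
lemma zero_of_nonneg_integral_zero {a b : ℝ} (hab : a < b) {φ : ℝ → ℝ}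
    (hc : ContinuousOn φ (Icc a b)) (hnn : ∀ s ∈ Icc a b, 0 ≤ φ s)
    (hz : (∫ s in a..b, φ s) = 0) : ∀ s ∈ Icc a b, φ s = 0 := by
  intro s hs
  by_contra hne
  have hpos : 0 < ∫ s in a..b, φ s :=
    intervalIntegral.integral_pos hab hc (fun x hx => hnn x ⟨hx.1.le, hx.2⟩)
      ⟨s, hs, (hnn s hs).lt_of_ne (Ne.symm hne)⟩
  rw [hz] at hpos
  exact lt_irrefl 0 hpos

end AreaSchur

open Set AreaSchur in
/-- analytic core of the affine Schur comparison: comparison of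
area functions `A''' + κA' = 1/2` and `Ā''' + κ̄Ā' = 1/2` with zero initial data
at `0`, given that the Lagrange kernel of `ȳ ↦ ȳ''' + κ̄ȳ'` is forward positive
on `[0,L]` and `A' > 0` on `(0,L]`. -/
theorem area_comparison (L : ℝ) (hL : 0 < L) (κ κbar : ℝ → ℝ)
    (hκ : ContinuousOn κ (Set.Icc 0 L)) (hκbar : ContinuousOn κbar (Set.Icc 0 L))
    (Kbar : ℝ → ℝ → ℝ)
    (hKsmooth : ∀ r, ContDiff ℝ 3 (fun s => Kbar s r))
    (hKode : ∀ r ∈ Set.Icc (0:ℝ) L, ∀ s ∈ Set.Icc (0:ℝ) L,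
      iteratedDeriv 3 (fun u => Kbar u r) s
        + κbar s * deriv (fun u => Kbar u r) s = 0)
    (hK0 : ∀ r ∈ Set.Icc (0:ℝ) L, Kbar r r = 0)
    (hK1 : ∀ r ∈ Set.Icc (0:ℝ) L, deriv (fun u => Kbar u r) r = 0)
    (hK2 : ∀ r ∈ Set.Icc (0:ℝ) L, iteratedDeriv 2 (fun u => Kbar u r) r = 1)
    (hKpos : ∀ r ∈ Set.Icc (0:ℝ) L, ∀ s ∈ Set.Icc (0:ℝ) L, r < s → 0 ≤ Kbar s r)
    (A Abar : ℝ → ℝ) (hA : ContDiff ℝ 3 A) (hAbar : ContDiff ℝ 3 Abar)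
    (hAode : ∀ s ∈ Set.Icc (0:ℝ) L,
      iteratedDeriv 3 A s + κ s * deriv A s = 1/2)
    (hAbarode : ∀ s ∈ Set.Icc (0:ℝ) L,
      iteratedDeriv 3 Abar s + κbar s * deriv Abar s = 1/2)
    (hAinit : A 0 = 0 ∧ deriv A 0 = 0 ∧ iteratedDeriv 2 A 0 = 0)
    (hAbarinit : Abar 0 = 0 ∧ deriv Abar 0 = 0 ∧ iteratedDeriv 2 Abar 0 = 0)
    (hA'pos : ∀ s ∈ Set.Ioc (0:ℝ) L, 0 < deriv A s) :
    ((∀ s ∈ Set.Icc (0:ℝ) L, κ s ≤ κbar s) → Abar L ≤ A L) ∧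
    ((∀ s ∈ Set.Icc (0:ℝ) L, κbar s ≤ κ s) → A L ≤ Abar L) ∧
    (((∀ s ∈ Set.Icc (0:ℝ) L, κ s ≤ κbar s) ∨
        (∀ s ∈ Set.Icc (0:ℝ) L, κbar s ≤ κ s)) →
      A L = Abar L → ∀ s ∈ Set.Icc (0:ℝ) L, κ s = κbar s) := by
  have h : KD L κbar Kbar := ⟨hL, hκbar, hKsmooth, hKode, hK0, hK1, hK2⟩
  obtain ⟨hdA, hdA2, hdA3, -⟩ := contDiff_deriv3 hA
  obtain ⟨hdB, hdB2, hdB3, -⟩ := contDiff_deriv3 hAbar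
  set v : ℝ → ℝ := fun s => deriv A s - deriv Abar s with hvdef
  set dv : ℝ → ℝ := fun s => deriv (deriv A) s - deriv (deriv Abar) s with hdvdef
  set ddv : ℝ → ℝ :=
    fun s => deriv (deriv (deriv A)) s - deriv (deriv (deriv Abar)) s with hddvdef
  set f : ℝ → ℝ := fun s => (κbar s - κ s) * deriv A s with hfdef
  set w : ℝ → ℝ := fun s => A s - Abar s with hwdef
  have hdv : ∀ s, HasDerivAt v (dv s) s := fun s =>
    ((hdA2 s).hasDerivAt).sub ((hdB2 s).hasDerivAt)
  have hddv : ∀ s, HasDerivAt dv (ddv s) s := fun s =>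
    ((hdA3 s).hasDerivAt).sub ((hdB3 s).hasDerivAt)
  have hw : ∀ s, HasDerivAt w (v s) s := fun s =>
    ((hdA s).hasDerivAt).sub ((hdB s).hasDerivAt)
  have hfc : ContinuousOn f (Set.Icc 0 L) :=
    (hκbar.sub hκ).mul hdA2.continuous.continuousOn
  have hode : ∀ s ∈ Set.Icc (0:ℝ) L, ddv s = f s - κbar s * v s := by
    intro s hs
    have e1 := hAode s hs
    have e2 := hAbarode s hs
    rw [iteratedDeriv_three] at e1 e2
    show deriv (deriv (deriv A)) s - deriv (deriv (deriv Abar)) s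
      = (κbar s - κ s) * deriv A s - κbar s * (deriv A s - deriv Abar s)
    nlinarith [e1, e2]
  have h0 : v 0 = 0 := by
    show deriv A 0 - deriv Abar 0 = 0
    rw [hAinit.2.1, hAbarinit.2.1, sub_zero]
  have h1 : dv 0 = 0 := by
    have e1 := hAinit.2.2
    have e2 := hAbarinit.2.2
    rw [iteratedDeriv_two] at e1 e2
    show deriv (deriv A) 0 - deriv (deriv Abar) 0 = 0
    rw [e1, e2, sub_zero]
  have hw0 : w 0 = 0 := by
    show A 0 - Abar 0 = 0
    rw [hAinit.1, hAbarinit.1, sub_zero]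
  have main : A L - Abar L = ∫ s in (0:ℝ)..L, Kbar L s * f s :=
    h.main_rep hdv hddv hfc hode h0 h1 hw hw0
  have hA'nn : ∀ s ∈ Set.Icc (0:ℝ) L, 0 ≤ deriv A s := by
    intro s hs
    rcases hs.1.eq_or_lt with he | hlt
    · rw [← he, hAinit.2.1]
    · exact (hA'pos s ⟨hlt, hs.2⟩).le
  have hKLnn : ∀ s ∈ Set.Icc (0:ℝ) L, 0 ≤ Kbar L s := by
    intro s hs
    rcases hs.2.eq_or_lt with he | hlt
    · rw [he, hK0 L ⟨hL.le, le_rfl⟩]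
    · exact hKpos s hs L ⟨hL.le, le_rfl⟩ hlt
  have hf0at0 : f 0 = 0 := by
    show (κbar 0 - κ 0) * deriv A 0 = 0
    rw [hAinit.2.1, mul_zero]
  -- Part 1
  have part1 : (∀ s ∈ Set.Icc (0:ℝ) L, κ s ≤ κbar s) → Abar L ≤ A L := by
    intro hle
    have hnn : 0 ≤ ∫ s in (0:ℝ)..L, Kbar L s * f s := by
      refine intervalIntegral.integral_nonneg hL.le ?_
      intro u hu
      exact mul_nonneg (hKLnn u hu)
        (mul_nonneg (sub_nonneg.2 (hle u hu)) (hA'nn u hu))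
    linarith [main, hnn]
  -- Part 2
  have part2 : (∀ s ∈ Set.Icc (0:ℝ) L, κbar s ≤ κ s) → A L ≤ Abar L := by
    intro hge
    have hnn : 0 ≤ ∫ s in (0:ℝ)..L, -(Kbar L s * f s) := by
      refine intervalIntegral.integral_nonneg hL.le ?_
      intro u hu
      have : Kbar L u * f u ≤ 0 := by
        have hfle : f u ≤ 0 :=
          mul_nonpos_of_nonpos_of_nonneg (by linarith [hge u hu]) (hA'nn u hu)
        exact mul_nonpos_of_nonneg_of_nonpos (hKLnn u hu) hfle
      linarith
    rw [intervalIntegral.integral_neg] at hnn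
    linarith [main, hnn]
  refine ⟨part1, part2, ?_⟩
  -- Equality case
  intro hsign hEq
  have hint0 : (∫ s in (0:ℝ)..L, Kbar L s * f s) = 0 := by
    rw [← main, hEq, sub_self]
  have hKf0 : ∀ s ∈ Set.Icc (0:ℝ) L, Kbar L s * f s = 0 := by
    have hcont : ContinuousOn (fun s => Kbar L s * f s) (Set.Icc 0 L) :=
      h.contKL.mul hfc
    rcases hsign with hle | hge
    · refine zero_of_nonneg_integral_zero hL hcont ?_ hint0
      intro u hu
      exact mul_nonneg (hKLnn u hu)
        (mul_nonneg (sub_nonneg.2 (hle u hu)) (hA'nn u hu))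
    · have hres := zero_of_nonneg_integral_zero hL (hcont.neg) ?_ ?_
      · intro u hu
        have h2 : -(Kbar L u * f u) = 0 := hres u hu
        linarith
      · intro u hu
        have hfle : f u ≤ 0 :=
          mul_nonpos_of_nonpos_of_nonneg (by linarith [hge u hu]) (hA'nn u hu)
        have : Kbar L u * f u ≤ 0 :=
          mul_nonpos_of_nonneg_of_nonpos (hKLnn u hu) hfle
        show 0 ≤ -(Kbar L u * f u)
        linarith
      · simp only [Pi.neg_apply]; rw [intervalIntegral.integral_neg, hint0, neg_zero]
  -- f vanishes identically
  have hf0 : ∀ s ∈ Set.Icc (0:ℝ) L, f s = 0 := by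
    by_contra hne
    push_neg at hne
    obtain ⟨s₁, hs₁, hfs₁⟩ := hne
    have hs₁pos : 0 < s₁ := by
      rcases hs₁.1.eq_or_lt with he | hlt
      · exfalso; rw [← he] at hfs₁; exact hfs₁ hf0at0
      · exact hlt
    have hcw := hfc s₁ hs₁
    rw [Metric.continuousWithinAt_iff] at hcw
    obtain ⟨δ, hδ0, hδ⟩ := hcw |f s₁| (abs_pos.2 hfs₁)
    set a' := max (s₁ / 2) (s₁ - δ / 2) with ha'def
    set b' := min L (s₁ + δ / 2) with hb'def
    have ha'lt : a' < s₁ := max_lt (by linarith) (by linarith)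
    have hs₁b' : s₁ ≤ b' := le_min hs₁.2 (by linarith)
    have hab' : a' < b' := lt_of_lt_of_le ha'lt hs₁b'
    have ha'mem : a' ∈ Set.Icc (0:ℝ) L :=
      ⟨le_trans (by linarith) (le_max_left _ _), ha'lt.le.trans hs₁.2⟩
    have hb'mem : b' ∈ Set.Icc (0:ℝ) L :=
      ⟨le_trans (le_trans (by linarith : (0:ℝ) ≤ s₁) hs₁b') le_rfl, min_le_left _ _⟩
    have hKzero : ∀ t ∈ Set.Icc a' b', Kbar L t = 0 := by
      intro t ht
      have htL : t ∈ Set.Icc (0:ℝ) L := ⟨ha'mem.1.trans ht.1, ht.2.trans hb'mem.2⟩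
      have hdist : dist t s₁ < δ := by
        rw [Real.dist_eq, abs_lt]
        constructor
        · have : s₁ - δ / 2 ≤ a' := le_max_right _ _
          have := ht.1
          linarith
        · have : b' ≤ s₁ + δ / 2 := min_le_right _ _
          have := ht.2
          linarith
      have hft : f t ≠ 0 := by
        intro hzero
        have := hδ htL hdist
        rw [Real.dist_eq, hzero, zero_sub, abs_neg] at this
        exact lt_irrefl _ this
      have := hKf0 t htL
      exact (mul_eq_zero.1 this).resolve_right hft
    exact h.no_flat hab' ha'mem hb'mem hKzero
  -- conclude κ = κbar
  have hIoc : ∀ s ∈ Set.Ioc (0:ℝ) L, κ s = κbar s := by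
    intro s hs
    have hf := hf0 s ⟨hs.1.le, hs.2⟩
    have hA' := hA'pos s hs
    have : κbar s - κ s = 0 := by
      rcases mul_eq_zero.1 hf with hc | hc
      · exact hc
      · exact absurd hc (ne_of_gt hA')
    linarith
  intro s hs
  rcases hs.1.eq_or_lt with he | hlt
  · -- s = 0 : limit argument
    subst he
    have hclos : (0:ℝ) ∈ closure (Set.Ioc (0:ℝ) L) := by
      rw [closure_Ioc hL.ne]
      exact ⟨le_rfl, hL.le⟩
    have hnebot : (nhdsWithin (0:ℝ) (Set.Ioc 0 L)).NeBot :=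
      mem_closure_iff_nhdsWithin_neBot.1 hclos
    have hsubset : Set.Ioc (0:ℝ) L ⊆ Set.Icc 0 L := Set.Ioc_subset_Icc_self
    have hκt : Filter.Tendsto κ (nhdsWithin 0 (Set.Ioc 0 L)) (nhds (κ 0)) :=
      (hκ 0 ⟨le_rfl, hL.le⟩).mono_left (nhdsWithin_mono _ hsubset)
    have hκbt : Filter.Tendsto κbar (nhdsWithin 0 (Set.Ioc 0 L)) (nhds (κbar 0)) :=
      (hκbar 0 ⟨le_rfl, hL.le⟩).mono_left (nhdsWithin_mono _ hsubset)
    have hκt' : Filter.Tendsto κ (nhdsWithin 0 (Set.Ioc 0 L)) (nhds (κbar 0)) := by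
      refine hκbt.congr' ?_
      filter_upwards [self_mem_nhdsWithin] with x hx
      exact (hIoc x hx).symm
    exact tendsto_nhds_unique hκt' hκt |>.symm
  · exact hIoc s ⟨hlt, hs.2⟩
end

section
/- Let 𝓛 be a lattice in ℝ² with fundamental-domain area A_𝓛, and let φ be an affine motion of ℝ² (φ(v) = Mv + b with det M = ±1, i.e. area-preserving affine bijection). Suppose there exist p₀, p₁, p₂ ∈ 𝓛 with φ(p₀), φ(p₁), φ(p₂) ∈ 𝓛 and Area(△ φ(p₀)φ(p₁)φ(p₂)) = A_𝓛/2. Then φ(𝓛) = 𝓛. -/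
noncomputable def wedge (v w : ℝ × ℝ) : ℝ := v.1 * w.2 - v.2 * w.1

/-- The lattice with origin `v₀` generated by `v₁` and `v₂`. -/
def lattice (v₀ v₁ v₂ : ℝ × ℝ) : Set (ℝ × ℝ) :=
  {p | ∃ m n : ℤ, p = v₀ + (m : ℝ) • v₁ + (n : ℝ) • v₂}

/-- Area of the triangle with the given vertices. -/
noncomputable def triArea (p₁ p₂ p₃ : ℝ × ℝ) : ℝ :=
  (1/2) * |wedge (p₂ - p₁) (p₃ - p₁)|

/-- `x` is an integer combination of `v₁` and `v₂`. -/
def inSpan (v₁ v₂ x : ℝ × ℝ) : Prop :=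
  ∃ m n : ℤ, x = (m : ℝ) • v₁ + (n : ℝ) • v₂

lemma inSpan_add {v₁ v₂ x y : ℝ × ℝ} (hx : inSpan v₁ v₂ x) (hy : inSpan v₁ v₂ y) :
    inSpan v₁ v₂ (x + y) := by
  obtain ⟨m, n, rfl⟩ := hx
  obtain ⟨m', n', rfl⟩ := hy
  exact ⟨m + m', n + n', by push_cast; module⟩

lemma inSpan_sub {v₁ v₂ x y : ℝ × ℝ} (hx : inSpan v₁ v₂ x) (hy : inSpan v₁ v₂ y) :
    inSpan v₁ v₂ (x - y) := by
  obtain ⟨m, n, rfl⟩ := hx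
  obtain ⟨m', n', rfl⟩ := hy
  exact ⟨m - m', n - n', by push_cast; module⟩

lemma inSpan_smul {v₁ v₂ x : ℝ × ℝ} (c : ℤ) (hx : inSpan v₁ v₂ x) :
    inSpan v₁ v₂ ((c : ℝ) • x) := by
  obtain ⟨m, n, rfl⟩ := hx
  exact ⟨c * m, c * n, by push_cast; module⟩

lemma inSpan_trans {v₁ v₂ w₁ w₂ x : ℝ × ℝ} (hx : inSpan w₁ w₂ x)
    (h1 : inSpan v₁ v₂ w₁) (h2 : inSpan v₁ v₂ w₂) : inSpan v₁ v₂ x := by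
  obtain ⟨m, n, rfl⟩ := hx
  exact inSpan_add (inSpan_smul m h1) (inSpan_smul n h2)

lemma mem_lattice_iff {v₀ v₁ v₂ p : ℝ × ℝ} :
    p ∈ lattice v₀ v₁ v₂ ↔ inSpan v₁ v₂ (p - v₀) := by
  constructor
  · rintro ⟨m, n, rfl⟩
    exact ⟨m, n, by abel⟩
  · rintro ⟨m, n, h⟩
    rw [sub_eq_iff_eq_add] at h
    exact ⟨m, n, by rw [h]; abel⟩

lemma wedge_inSpan {v₁ v₂ w₁ w₂ : ℝ × ℝ} (a b c d : ℤ)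
    (h1 : w₁ = (a : ℝ) • v₁ + (b : ℝ) • v₂) (h2 : w₂ = (c : ℝ) • v₁ + (d : ℝ) • v₂) :
    wedge w₁ w₂ = ((a * d - b * c : ℤ) : ℝ) * wedge v₁ v₂ := by
  subst h1 h2
  simp only [wedge, Prod.fst_add, Prod.snd_add, Prod.smul_fst, Prod.smul_snd, smul_eq_mul]
  push_cast
  ring

/-- If `w₁, w₂` are integer combinations of `v₁, v₂` with the same (nonzero) wedge in
absolute value, then conversely `v₁, v₂` are integer combinations of `w₁, w₂`. -/
lemma basis_swap {v₁ v₂ w₁ w₂ : ℝ × ℝ} (hv : wedge v₁ v₂ ≠ 0)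
    (hw₁ : inSpan v₁ v₂ w₁) (hw₂ : inSpan v₁ v₂ w₂)
    (habs : |wedge w₁ w₂| = |wedge v₁ v₂|) :
    inSpan w₁ w₂ v₁ ∧ inSpan w₁ w₂ v₂ := by
  obtain ⟨a, b, h1⟩ := hw₁
  obtain ⟨c, d, h2⟩ := hw₂
  have hw := wedge_inSpan a b c d h1 h2
  have hDabs : |((a * d - b * c : ℤ) : ℝ)| = 1 := by
    rw [hw, abs_mul] at habs
    field_simp at habs
    exact_mod_cast habs
  have hD2 : ((a : ℝ) * d - b * c) * ((a : ℝ) * d - b * c) = 1 := by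
    rcases abs_eq (by norm_num : (0:ℝ) ≤ 1) |>.mp hDabs with h | h <;>
      push_cast at h <;> rw [h] <;> norm_num
  constructor
  · refine ⟨(a * d - b * c) * d, -((a * d - b * c) * b), ?_⟩
    rw [h1, h2]
    push_cast
    refine Prod.ext ?_ ?_ <;>
      simp only [Prod.fst_add, Prod.snd_add, Prod.smul_fst, Prod.smul_snd, smul_eq_mul,
        Prod.fst_neg, Prod.snd_neg, neg_mul, neg_smul]
    · linear_combination (-v₁.1) * hD2
    · linear_combination (-v₁.2) * hD2
  · refine ⟨-((a * d - b * c) * c), (a * d - b * c) * a, ?_⟩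
    rw [h1, h2]
    push_cast
    refine Prod.ext ?_ ?_ <;>
      simp only [Prod.fst_add, Prod.snd_add, Prod.smul_fst, Prod.smul_snd, smul_eq_mul,
        Prod.fst_neg, Prod.snd_neg, neg_mul, neg_smul]
    · linear_combination (-v₂.1) * hD2
    · linear_combination (-v₂.2) * hD2

lemma wedge_map (M : (ℝ × ℝ) →ₗ[ℝ] (ℝ × ℝ)) (x y : ℝ × ℝ) :
    wedge (M x) (M y) = LinearMap.det M * wedge x y := by
  have hdet : LinearMap.det M = wedge (M (1,0)) (M (0,1)) := by
    rw [← LinearMap.det_toMatrix (Module.Basis.finTwoProd ℝ), Matrix.det_fin_two]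
    simp [LinearMap.toMatrix_apply, wedge]; ring
  have hx : M x = x.1 • M (1,0) + x.2 • M (0,1) := by
    rw [← map_smul, ← map_smul, ← map_add]
    congr 1
    simp [Prod.ext_iff]
  have hy : M y = y.1 • M (1,0) + y.2 • M (0,1) := by
    rw [← map_smul, ← map_smul, ← map_add]
    congr 1
    simp [Prod.ext_iff]
  rw [hdet, hx, hy]
  simp only [wedge, Prod.fst_add, Prod.snd_add, Prod.smul_fst, Prod.smul_snd, smul_eq_mul]
  ring

/-- an area-preserving affine motion mapping three lattice points
to lattice points that span a triangle of area half the fundamental-domain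
area preserves the lattice. -/
theorem affine_motion_preserves_lattice (v₀ v₁ v₂ : ℝ × ℝ)
    (hind : wedge v₁ v₂ ≠ 0) (φ : ℝ × ℝ → ℝ × ℝ)
    (M : (ℝ × ℝ) →ₗ[ℝ] (ℝ × ℝ)) (b : ℝ × ℝ)
    (hφ : ∀ v, φ v = M v + b) (hdet : |LinearMap.det M| = 1)
    (p₀ p₁ p₂ : ℝ × ℝ)
    (hp : p₀ ∈ lattice v₀ v₁ v₂ ∧ p₁ ∈ lattice v₀ v₁ v₂ ∧ p₂ ∈ lattice v₀ v₁ v₂)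
    (hφp : φ p₀ ∈ lattice v₀ v₁ v₂ ∧ φ p₁ ∈ lattice v₀ v₁ v₂ ∧
      φ p₂ ∈ lattice v₀ v₁ v₂)
    (harea : triArea (φ p₀) (φ p₁) (φ p₂) = |wedge v₁ v₂| / 2) :
    φ '' lattice v₀ v₁ v₂ = lattice v₀ v₁ v₂ := by
  obtain ⟨hp0, hp1, hp2⟩ := hp
  obtain ⟨hq0, hq1, hq2⟩ := hφp
  rw [mem_lattice_iff] at hp0 hp1 hp2 hq0 hq1 hq2
  -- difference vectors
  set e₁ := p₁ - p₀ with he₁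
  set e₂ := p₂ - p₀ with he₂
  set f₁ := φ p₁ - φ p₀ with hf₁
  set f₂ := φ p₂ - φ p₀ with hf₂
  have he₁s : inSpan v₁ v₂ e₁ := by
    have : e₁ = (p₁ - v₀) - (p₀ - v₀) := by rw [he₁]; abel
    rw [this]; exact inSpan_sub hp1 hp0
  have he₂s : inSpan v₁ v₂ e₂ := by
    have : e₂ = (p₂ - v₀) - (p₀ - v₀) := by rw [he₂]; abel
    rw [this]; exact inSpan_sub hp2 hp0
  have hf₁s : inSpan v₁ v₂ f₁ := by
    have : f₁ = (φ p₁ - v₀) - (φ p₀ - v₀) := by rw [hf₁]; abel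
    rw [this]; exact inSpan_sub hq1 hq0
  have hf₂s : inSpan v₁ v₂ f₂ := by
    have : f₂ = (φ p₂ - v₀) - (φ p₀ - v₀) := by rw [hf₂]; abel
    rw [this]; exact inSpan_sub hq2 hq0
  -- f = M e
  have hMe₁ : f₁ = M e₁ := by rw [hf₁, he₁, hφ, hφ, map_sub]; abel
  have hMe₂ : f₂ = M e₂ := by rw [hf₂, he₂, hφ, hφ, map_sub]; abel
  -- area facts
  have habsf : |wedge f₁ f₂| = |wedge v₁ v₂| := by
    have := harea
    rw [triArea] at this
    have h2 : |wedge f₁ f₂| / 2 = |wedge v₁ v₂| / 2 := by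
      rw [← this]; ring
    linarith
  have habse : |wedge e₁ e₂| = |wedge v₁ v₂| := by
    have : wedge f₁ f₂ = LinearMap.det M * wedge e₁ e₂ := by
      rw [hMe₁, hMe₂, wedge_map]
    rw [this, abs_mul, hdet, one_mul] at habsf
    exact habsf
  obtain ⟨hv₁e, hv₂e⟩ := basis_swap hind he₁s he₂s habse
  obtain ⟨hv₁f, hv₂f⟩ := basis_swap hind hf₁s hf₂s habsf
  ext r
  constructor
  · rintro ⟨q, hq, rfl⟩
    rw [mem_lattice_iff] at hq ⊢
    have hqp : inSpan e₁ e₂ (q - p₀) := by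
      have h : q - p₀ = (q - v₀) - (p₀ - v₀) := by abel
      rw [h]
      exact inSpan_trans (inSpan_sub hq hp0) hv₁e hv₂e
    obtain ⟨m, n, hmn⟩ := hqp
    have hφq : φ q - v₀ = ((m : ℝ) • f₁ + (n : ℝ) • f₂) + (φ p₀ - v₀) := by
      rw [hMe₁, hMe₂, ← map_smul, ← map_smul, ← map_add, ← hmn, hφ q, hφ p₀, map_sub]
      abel
    rw [hφq]
    exact inSpan_add (inSpan_trans ⟨m, n, rfl⟩ hf₁s hf₂s) hq0
  · intro hr
    rw [mem_lattice_iff] at hr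
    have hrf : inSpan f₁ f₂ (r - φ p₀) := by
      have h : r - φ p₀ = (r - v₀) - (φ p₀ - v₀) := by abel
      rw [h]
      exact inSpan_trans (inSpan_sub hr hq0) hv₁f hv₂f
    obtain ⟨m, n, hmn⟩ := hrf
    refine ⟨p₀ + (m : ℝ) • e₁ + (n : ℝ) • e₂, ?_, ?_⟩
    · rw [mem_lattice_iff]
      have h : p₀ + (m : ℝ) • e₁ + (n : ℝ) • e₂ - v₀
          = ((m : ℝ) • e₁ + (n : ℝ) • e₂) + (p₀ - v₀) := by abel
      rw [h]
      exact inSpan_add (inSpan_trans ⟨m, n, rfl⟩ he₁s he₂s) hp0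
    · have hr' : r = φ p₀ + ((m : ℝ) • f₁ + (n : ℝ) • f₂) := by
        rw [← hmn]; abel
      rw [hr', hMe₁, hMe₂]
      simp only [hφ, map_add, map_smul]
      abel
end
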